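/- arXiv:2107.08071 — 6 statements merged into one kernel-verified Lean document; each statement's English description precedes it below -/
import Mathlib

section
/- For every n ≥ 1, the permutation graph G_{p_{2n}} of the permutation p_{2n} is isomorphic to the fork graph F_{2n}. In particular, every fork graph F_{2n} on an even-length path is a permutation graph. -/
/-- The permutation graph of `σ`: vertices `i < j` are adjacent iff `σ i > σ j`. -/
def permGraph {n : ℕ} (σ : Equiv.Perm (Fin n)) : SimpleGraph (Fin n) :=
  SimpleGraph.fromRel (fun i j => i < j ∧ σ j < σ i)


/-- The fork graph `F k`: a path on `k` vertices (labelled `2, …, k+1`) with two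
extra leaves (`0` and `1`) adjacent to the first path vertex and two extra
leaves (`k+2` and `k+3`) adjacent to the last path vertex. -/
def forkGraph (k : ℕ) : SimpleGraph (Fin (k + 4)) :=
  SimpleGraph.fromRel (fun i j =>
    ((i : ℕ) = 0 ∧ (j : ℕ) = 2) ∨
    ((i : ℕ) = 1 ∧ (j : ℕ) = 2) ∨
    (2 ≤ (i : ℕ) ∧ (j : ℕ) = (i : ℕ) + 1 ∧ (j : ℕ) ≤ k + 1) ∨
    ((i : ℕ) = k + 1 ∧ (j : ℕ) = k + 2) ∨
    ((i : ℕ) = k + 1 ∧ (j : ℕ) = k + 3))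

/-- The one-line values (0-based positions and values) of the permutation `p_{2n}`
of `{1,…,2n+4}` given in 1-based one-line notation by `p(1)=4, p(2)=1, p(3)=2`,
`p(2k)=2k+2` and `p(2k+1)=2k−1` for `2 ≤ k ≤ n`, `p(2n+2)=2n+3`, `p(2n+3)=2n+4`,
`p(2n+4)=2n+1` (e.g. `p_2 = 412563`, `p_4 = 41263785`). -/
def pVal (n i : ℕ) : ℕ :=
  if i = 0 then 3
  else if i = 1 then 0
  else if i = 2 then 1
  else if i = 2 * n + 1 then 2 * n + 2
  else if i = 2 * n + 2 then 2 * n + 3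
  else if i = 2 * n + 3 then 2 * n
  else if i % 2 = 1 then i + 2
  else i - 2

/-!
The permutation graph of `p` only sees the relative order of the points `(i, p i)`. Put fork vertex
`j` at the point `(forkPos n j, forkVal n j)`: the path vertices `2, 3, 4, …, 2n+1` zigzag around
the diagonal at `(0, 3), (4, 2), (3, 5), (6, 4), …, (2n+3, 2n)`, so each of them is out of order
exactly with its path neighbours; the leaves `0, 1` lie below and to the right of vertex `2`, and
the leaves `2n+2, 2n+3` above and to the left of vertex `2n+1`. Each fork vertex has one of eight
shapes, and for every pair of shapes both adjacency relations are linear conditions.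
-/

theorem permGraph_adj_iff {m : ℕ} (σ : Equiv.Perm (Fin m)) (i j : Fin m) :
    (permGraph σ).Adj i j ↔ i ≠ j ∧ (i < j ↔ σ j < σ i) := by
  simp only [permGraph, SimpleGraph.fromRel_adj]
  constructor
  · rintro ⟨hne, ⟨hij, hσ⟩ | ⟨hji, hσ⟩⟩
    · exact ⟨hne, iff_of_true hij hσ⟩
    · exact ⟨hne, iff_of_false hji.not_gt hσ.not_gt⟩
  · rintro ⟨hne, h⟩
    refine ⟨hne, (lt_or_gt_of_ne hne).imp (fun hij => ⟨hij, h.mp hij⟩) (fun hji => ⟨hji, ?_⟩)⟩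
    exact (lt_or_gt_of_ne (σ.injective.ne hne)).resolve_right (mt h.mpr hji.not_gt)

theorem forkGraph_adj_iff_of_lt {k : ℕ} {a b : Fin (k + 4)} (hab : a < b) :
    (forkGraph k).Adj a b ↔
      ((a : ℕ) ≤ 1 ∧ (b : ℕ) = 2) ∨ (2 ≤ (a : ℕ) ∧ (b : ℕ) = a + 1 ∧ (b : ℕ) ≤ k + 1) ∨
        ((a : ℕ) = k + 1 ∧ k + 2 ≤ (b : ℕ)) := by
  rw [Fin.lt_def] at hab
  simp only [forkGraph, SimpleGraph.fromRel_adj, ne_eq, Fin.ext_iff]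
  omega

theorem pVal_cases {n i : ℕ} (hi : i < 2 * n + 4) :
    (i = 0 ∧ pVal n i = 3) ∨ (i = 1 ∧ pVal n i = 0) ∨ (i = 2 ∧ pVal n i = 1) ∨
    (i = 2 * n + 1 ∧ pVal n i = 2 * n + 2) ∨ (i = 2 * n + 2 ∧ pVal n i = 2 * n + 3) ∨
    (i = 2 * n + 3 ∧ pVal n i = 2 * n) ∨
    (3 ≤ i ∧ i < 2 * n ∧ i % 2 = 1 ∧ pVal n i = i + 2) ∨
    (4 ≤ i ∧ i ≤ 2 * n ∧ i % 2 = 0 ∧ pVal n i = i - 2) := by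
  unfold pVal
  split_ifs
  · exact .inl ⟨‹_›, rfl⟩
  · exact .inr <| .inl ⟨‹_›, rfl⟩
  · exact .inr <| .inr <| .inl ⟨‹_›, rfl⟩
  · exact .inr <| .inr <| .inr <| .inl ⟨‹_›, rfl⟩
  · exact .inr <| .inr <| .inr <| .inr <| .inl ⟨‹_›, rfl⟩
  · exact .inr <| .inr <| .inr <| .inr <| .inr <| .inl ⟨‹_›, rfl⟩
  · exact .inr <| .inr <| .inr <| .inr <| .inr <| .inr <| .inl ⟨by omega, by omega, ‹_›, rfl⟩
  · exact .inr <| .inr <| .inr <| .inr <| .inr <| .inr <| .inr ⟨by omega, by omega, by omega, rfl⟩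

/-- Fork vertex `j` becomes the entry of `p_{2n}` at (0-based) position `forkPos n j`; its value
is `forkVal n j` (see `pVal_forkPos`). -/
def forkPos (n j : ℕ) : ℕ :=
  if j = 0 then 1
  else if j = 1 then 2
  else if j = 2 then 0
  else if j = 2 * n + 1 then 2 * n + 3
  else if j = 2 * n + 2 then 2 * n + 1
  else if j = 2 * n + 3 then 2 * n + 2
  else if j % 2 = 1 then j + 1
  else j - 1

def forkVal (n j : ℕ) : ℕ :=
  if j = 0 then 0
  else if j = 1 then 1
  else if j = 2 then 3
  else if j = 2 * n + 1 then 2 * n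
  else if j = 2 * n + 2 then 2 * n + 2
  else if j = 2 * n + 3 then 2 * n + 3
  else if j % 2 = 1 then j - 1
  else j + 1

theorem forkPos_forkVal_cases {n j : ℕ} (hj : j < 2 * n + 4) :
    (j = 0 ∧ forkPos n j = 1 ∧ forkVal n j = 0) ∨
    (j = 1 ∧ forkPos n j = 2 ∧ forkVal n j = 1) ∨
    (j = 2 ∧ forkPos n j = 0 ∧ forkVal n j = 3) ∨
    (j = 2 * n + 1 ∧ forkPos n j = 2 * n + 3 ∧ forkVal n j = 2 * n) ∨
    (j = 2 * n + 2 ∧ forkPos n j = 2 * n + 1 ∧ forkVal n j = 2 * n + 2) ∨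
    (j = 2 * n + 3 ∧ forkPos n j = 2 * n + 2 ∧ forkVal n j = 2 * n + 3) ∨
    (3 ≤ j ∧ j < 2 * n ∧ j % 2 = 1 ∧ forkPos n j = j + 1 ∧ forkVal n j = j - 1) ∨
    (4 ≤ j ∧ j ≤ 2 * n ∧ j % 2 = 0 ∧ forkPos n j = j - 1 ∧ forkVal n j = j + 1) := by
  unfold forkPos forkVal
  split_ifs
  · exact .inl ⟨‹_›, rfl, rfl⟩
  · exact .inr <| .inl ⟨‹_›, rfl, rfl⟩
  · exact .inr <| .inr <| .inl ⟨‹_›, rfl, rfl⟩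
  · exact .inr <| .inr <| .inr <| .inl ⟨‹_›, rfl, rfl⟩
  · exact .inr <| .inr <| .inr <| .inr <| .inl ⟨‹_›, rfl, rfl⟩
  · exact .inr <| .inr <| .inr <| .inr <| .inr <| .inl ⟨‹_›, rfl, rfl⟩
  · exact .inr <| .inr <| .inr <| .inr <| .inr <| .inr <| .inl ⟨by omega, by omega, ‹_›, rfl, rfl⟩
  · exact .inr <| .inr <| .inr <| .inr <| .inr <| .inr <| .inr ⟨by omega, by omega, by omega, rfl, rfl⟩

theorem forkPos_lt {n j : ℕ} (hj : j < 2 * n + 4) : forkPos n j < 2 * n + 4 := by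
  unfold forkPos
  split_ifs <;> omega

theorem eq_of_forkPos_eq {n a b : ℕ} (hn : 1 ≤ n) (ha : a < 2 * n + 4) (hb : b < 2 * n + 4)
    (h : forkPos n a = forkPos n b) : a = b := by
  have := forkPos_forkVal_cases ha
  have := forkPos_forkVal_cases hb
  omega

theorem pVal_forkPos {n j : ℕ} (hn : 1 ≤ n) (hj : j < 2 * n + 4) :
    pVal n (forkPos n j) = forkVal n j := by
  have := forkPos_forkVal_cases hj
  have := pVal_cases (forkPos_lt (n := n) hj)
  omega

theorem forkPos_lt_iff_forkVal_lt_iff {n a b : ℕ} (hn : 1 ≤ n) (hab : a < b) (hb : b < 2 * n + 4) :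
    (forkPos n a < forkPos n b ↔ forkVal n b < forkVal n a) ↔
      (a ≤ 1 ∧ b = 2) ∨ (2 ≤ a ∧ b = a + 1 ∧ b ≤ 2 * n + 1) ∨ (a = 2 * n + 1 ∧ 2 * n + 2 ≤ b) := by
  rcases forkPos_forkVal_cases (hab.trans hb) with ha | ha | ha | ha | ha | ha | ha | ha <;>
  rcases forkPos_forkVal_cases hb with hb | hb | hb | hb | hb | hb | hb | hb <;>
  omega

def forkPosFin (n : ℕ) (j : Fin (2 * n + 4)) : Fin (2 * n + 4) :=
  ⟨forkPos n j, forkPos_lt j.isLt⟩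

theorem forkPosFin_injective {n : ℕ} (hn : 1 ≤ n) : Function.Injective (forkPosFin n) :=
  fun a b h => Fin.ext (eq_of_forkPos_eq hn a.isLt b.isLt (congrArg Fin.val h))

theorem permGraph_adj_forkPosFin_iff {n : ℕ} (hn : 1 ≤ n) {σ : Equiv.Perm (Fin (2 * n + 4))}
    (hσ : ∀ i : Fin (2 * n + 4), (σ i : ℕ) = pVal n (i : ℕ)) (a b : Fin (2 * n + 4)) :
    (permGraph σ).Adj (forkPosFin n a) (forkPosFin n b) ↔ (forkGraph (2 * n)).Adj a b := by
  wlog hab : a < b generalizing a b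
  · rcases (not_lt.mp hab).lt_or_eq with hba | rfl
    · rw [SimpleGraph.adj_comm, (forkGraph _).adj_comm]
      exact this b a hba
    · simp
  have hne : forkPosFin n a ≠ forkPosFin n b := (forkPosFin_injective hn).ne hab.ne
  rw [permGraph_adj_iff, forkGraph_adj_iff_of_lt hab, and_iff_right hne]
  simp only [forkPosFin, Fin.lt_def, hσ, pVal_forkPos hn a.isLt, pVal_forkPos hn b.isLt]
  exact forkPos_lt_iff_forkVal_lt_iff hn hab b.isLt

/-- For every `n ≥ 1`, the permutation graph of `p_{2n}` is
isomorphic to the fork graph `F_{2n}`; in particular every fork graph `F_{2n}`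
on an even-length path is a permutation graph. -/
theorem permGraph_p_iso_fork (n : ℕ) (hn : 1 ≤ n)
    (σ : Equiv.Perm (Fin (2 * n + 4)))
    (hσ : ∀ i : Fin (2 * n + 4), (σ i : ℕ) = pVal n (i : ℕ)) :
    Nonempty (permGraph σ ≃g forkGraph (2 * n)) ∧
    ∃ π : Equiv.Perm (Fin (2 * n + 4)), Nonempty (permGraph π ≃g forkGraph (2 * n)) := by
  let e := Equiv.ofBijective _ (Finite.injective_iff_bijective.mp (forkPosFin_injective hn))
  let iso : forkGraph (2 * n) ≃g permGraph σ := ⟨e, permGraph_adj_forkPosFin_iff hn hσ _ _⟩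
  exact ⟨⟨iso.symm⟩, σ, ⟨iso.symm⟩⟩
end

section
/- If a permutation τ of {1,…,n} is obtained from a permutation σ of {1,…,n} by a Type II move, then the permutation graph G_τ has strictly more edges than the permutation graph G_σ (while the number of vertices is unchanged); equivalently, τ has strictly more inversions than σ. -/
/-- `τ` is obtained from `σ` by a Type II move at positions `p < q`:
`σ p < σ q`, every value strictly between `σ p` and `σ q` occurs at a position
smaller than `q`, and `τ` is `σ` with the values at positions `p` and `q` swapped. -/
def PermTypeIIAt {n : ℕ} (σ τ : Equiv.Perm (Fin n)) (p q : Fin n) : Prop :=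
  p < q ∧ σ p < σ q ∧ (∀ v : Fin n, σ p < v → v < σ q → σ.symm v < q) ∧
    τ = σ * Equiv.swap p q

/-- `τ` is obtained from `σ` by a Type II move. -/
def PermTypeII {n : ℕ} (σ τ : Equiv.Perm (Fin n)) : Prop :=
  ∃ p q : Fin n, PermTypeIIAt σ τ p q

/-- `σ` is Type-I-below `τ`: there is a strictly increasing choice of positions
`f` with `τ (f j) ≥ σ j` for all `j`, and `σ` order isomorphic to the subword of
`τ` on those positions. -/
def TypeIBelow {n m : ℕ} (σ : Equiv.Perm (Fin n)) (τ : Equiv.Perm (Fin m)) : Prop :=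
  ∃ f : Fin n → Fin m, StrictMono f ∧ (∀ j, (σ j : ℕ) ≤ (τ (f j) : ℕ)) ∧
    ∀ j k, σ j < σ k ↔ τ (f j) < τ (f k)

/-- One step of the order `≤ᵢ` on permutations of arbitrary sizes: either a
Type-I-below relation or (for equal sizes) a Type II move. -/
def PermStep : (Σ n : ℕ, Equiv.Perm (Fin n)) → (Σ n : ℕ, Equiv.Perm (Fin n)) → Prop :=
  fun x y => TypeIBelow x.2 y.2 ∨
    ∃ h : x.1 = y.1, PermTypeII (Equiv.permCongr (finCongr h) x.2) y.2

/-- The order `≤ᵢ` on permutations of arbitrary sizes: the reflexive–transitive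
closure of the union of the Type-I-below relation and the Type II move relation. -/
def PermLeI : (Σ n : ℕ, Equiv.Perm (Fin n)) → (Σ n : ℕ, Equiv.Perm (Fin n)) → Prop :=
  Relation.ReflTransGen PermStep

/-!
Swapping the values at an ascent `p < q` of `σ` adds inversions. With `s = swap p q`, send an
inversion `(i, j)` of `σ` to `(s i, s j)` when `s` keeps `i` and `j` in order and to itself when
`s` reverses them. This is an involution on pairs, so it is injective; it lands in the inversions
of `τ = σ * s`, since a reversed pair has `i = p` or `j = q` and `σ p < σ q`; and it misses
`(p, q)`, which is an inversion of `τ` but not of `σ`.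
-/

open Finset

theorem SimpleGraph.ncard_edgeSet_fromRel_of_lt {V : Type*} [LinearOrder V] [Fintype V]
    (r : V → V → Prop) [DecidableRel r] (hr : ∀ i j, r i j → i < j) :
    (fromRel r).edgeSet.ncard = #{x : V × V | r x.1 x.2} := by
  have hedges : (fromRel r).edgeSet = (fun x : V × V ↦ s(x.1, x.2)) '' {x | r x.1 x.2} := by
    ext ⟨i, j⟩
    simp only [mem_edgeSet, fromRel_adj, Set.mem_image, Set.mem_ofPred_eq, Sym2.eq_iff,
      Prod.exists]
    constructor
    · rintro ⟨-, h | h⟩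
      exacts [⟨i, j, h, .inl ⟨rfl, rfl⟩⟩, ⟨j, i, h, .inr ⟨rfl, rfl⟩⟩]
    · rintro ⟨a, b, hab, ⟨rfl, rfl⟩ | ⟨rfl, rfl⟩⟩
      exacts [⟨(hr _ _ hab).ne, .inl hab⟩, ⟨(hr _ _ hab).ne', .inr hab⟩]
  have hinj : Set.InjOn (fun x : V × V ↦ s(x.1, x.2)) {x | r x.1 x.2} := by
    rintro ⟨a, b⟩ hab ⟨c, d⟩ hcd h
    rcases Sym2.eq_iff.1 h with ⟨rfl, rfl⟩ | ⟨rfl, rfl⟩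
    · rfl
    · exact absurd (hr _ _ hab) (hr _ _ hcd).asymm
  rw [hedges, hinj.ncard_image, ← Set.ncard_coe_finset]
  simp

namespace Equiv.Perm

variable {α : Type*} [LinearOrder α]

def inversions [Fintype α] (σ : Perm α) : Finset (α × α) :=
  {x | x.1 < x.2 ∧ σ x.2 < σ x.1}

@[simp]
theorem mem_inversions [Fintype α] {σ : Perm α} {x : α × α} :
    x ∈ σ.inversions ↔ x.1 < x.2 ∧ σ x.2 < σ x.1 := by
  simp [inversions]

def mapPairIfOrderPreserved (s : Perm α) (x : α × α) : α × α :=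
  if (x.1 < x.2 ↔ s x.1 < s x.2) then (s x.1, s x.2) else x

theorem mapPairIfOrderPreserved_involutive {s : Perm α} (hs : Function.Involutive s) :
    Function.Involutive (mapPairIfOrderPreserved s) := by
  rintro ⟨i, j⟩
  by_cases h : i < j ↔ s i < s j
  · simp [mapPairIfOrderPreserved, h, hs i, hs j]
  · simp [mapPairIfOrderPreserved, h]

theorem eq_or_eq_of_swap_lt_swap {p q i j : α} (hpq : p < q) (hij : i < j)
    (h : swap p q j < swap p q i) : i = p ∨ j = q := by
  by_contra! hne
  simp only [swap_apply_def] at h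
  split_ifs at h <;> order

theorem mapPairIfOrderPreserved_mem_inversions_mul_swap [Fintype α] {σ : Perm α} {p q : α}
    (hpq : p < q) (hσ : σ p < σ q) {x : α × α} (hx : x ∈ σ.inversions) :
    mapPairIfOrderPreserved (swap p q) x ∈ (σ * swap p q).inversions := by
  obtain ⟨i, j⟩ := x
  simp only [mem_inversions] at hx ⊢
  obtain ⟨hij, hσij⟩ := hx
  by_cases hord : swap p q i < swap p q j
  · simp [mapPairIfOrderPreserved, hij, hord, swap_apply_self, hσij]
  · have hrev : swap p q j < swap p q i :=
      lt_of_le_of_ne (not_lt.1 hord) ((swap p q).injective.ne hij.ne')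
    simp only [mapPairIfOrderPreserved, hij, hord, iff_false, not_true_eq_false,
      if_false, mul_apply, true_and]
    rcases eq_or_eq_of_swap_lt_swap hpq hij hrev with rfl | rfl
    · rw [swap_apply_left, swap_apply_of_ne_of_ne hij.ne' (by rintro rfl; exact hσij.asymm hσ)]
      exact hσij.trans hσ
    · rw [swap_apply_right, swap_apply_of_ne_of_ne (by rintro rfl; exact hσij.asymm hσ) hij.ne]
      exact hσ.trans hσij

theorem card_inversions_lt_card_inversions_mul_swap [Fintype α] {σ : Perm α} {p q : α}
    (hpq : p < q) (hσ : σ p < σ q) :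
    #σ.inversions < #(σ * swap p q).inversions := by
  set f := mapPairIfOrderPreserved (swap p q)
  have hf : Function.Involutive f := mapPairIfOrderPreserved_involutive (swap_apply_self p q)
  have hpq_fixed : f (p, q) = (p, q) := by
    simp [f, mapPairIfOrderPreserved, hpq, hpq.not_gt]
  have hpq_not_mem : (p, q) ∉ σ.inversions := by
    simp [hσ.not_gt]
  have hmaps : Set.MapsTo f ↑(insert (p, q) σ.inversions) (σ * swap p q).inversions := by
    intro x hx
    rcases mem_insert.1 (mem_coe.1 hx) with rfl | hx
    · rw [hpq_fixed, mem_coe]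
      simpa [hpq] using hσ
    · exact mapPairIfOrderPreserved_mem_inversions_mul_swap hpq hσ hx
  calc #σ.inversions < #(insert (p, q) σ.inversions) := card_lt_card (ssubset_insert hpq_not_mem)
    _ ≤ #(σ * swap p q).inversions := card_le_card_of_injOn f hmaps hf.injective.injOn

end Equiv.Perm

theorem permGraph_edgeSet_ncard {n : ℕ} (σ : Equiv.Perm (Fin n)) :
    (permGraph σ).edgeSet.ncard = #σ.inversions :=
  SimpleGraph.ncard_edgeSet_fromRel_of_lt _ fun _ _ h ↦ h.1

/-- If `τ` is obtained from `σ` by a Type II move, then the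
permutation graph `G_τ` has strictly more edges than `G_σ` (the number of
vertices being unchanged); equivalently, `τ` has strictly more inversions
than `σ`. -/
theorem typeII_strictly_more_edges {n : ℕ} (σ τ : Equiv.Perm (Fin n))
    (h : PermTypeII σ τ) :
    (permGraph σ).edgeSet.ncard < (permGraph τ).edgeSet.ncard ∧
    (Finset.univ.filter fun p : Fin n × Fin n => p.1 < p.2 ∧ σ p.2 < σ p.1).card <
      (Finset.univ.filter fun p : Fin n × Fin n => p.1 < p.2 ∧ τ p.2 < τ p.1).card := by
  obtain ⟨p, q, hpq, hσ, -, rfl⟩ := h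
  have hlt := Equiv.Perm.card_inversions_lt_card_inversions_mul_swap hpq hσ
  rw [permGraph_edgeSet_ncard, permGraph_edgeSet_ncard]
  exact ⟨hlt, hlt⟩
end

section
/- Type II moves preserve connectivity in permutation graphs: if a permutation τ of {1,…,n} is obtained from a permutation σ of {1,…,n} by a Type II move, then any two vertices that are joined by a path in G_σ are joined by a path in G_τ. In particular, a Type II move cannot disconnect a connected component of the permutation graph. -/
/-!
Let the move swap the values at positions `p < q`; then `p` and `q` are adjacent in `G_τ`.
Every edge of `G_σ` is an edge of `G_τ`, except that an edge `x – p` with `x < p` may be lost;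
but then `x – q` is an edge of `G_τ`, so `x` still reaches `p` through `q`. An edge `q – x` with
`q < x` survives because the condition on intermediate values forces `σ x < σ p`. So the ends
of every edge of `G_σ` are connected in `G_τ`.
-/

theorem SimpleGraph.Reachable.mono_of_adj {V : Type*} {G H : SimpleGraph V}
    (hGH : ∀ ⦃a b⦄, G.Adj a b → H.Reachable a b) {u v : V} (huv : G.Reachable u v) :
    H.Reachable u v := by
  rw [reachable_iff_reflTransGen] at huv ⊢
  exact Relation.reflTransGen_closed (fun a b hab ↦ (reachable_iff_reflTransGen a b).1 (hGH hab))
    u v huv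

section PermGraph

variable {n : ℕ} {σ τ : Equiv.Perm (Fin n)} {i j : Fin n}

theorem permGraph_adj :
    (permGraph σ).Adj i j ↔ i < j ∧ σ j < σ i ∨ j < i ∧ σ i < σ j := by
  rw [permGraph, SimpleGraph.fromRel_adj, and_iff_right_iff_imp]
  rintro (⟨hij, -⟩ | ⟨hji, -⟩)
  exacts [hij.ne, hji.ne']

theorem permGraph_adj_of_lt (hij : i < j) (hσ : σ j < σ i) : (permGraph σ).Adj i j :=
  permGraph_adj.2 (Or.inl ⟨hij, hσ⟩)

theorem permGraph_adj_congr (hi : τ i = σ i) (hj : τ j = σ j) :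
    (permGraph τ).Adj i j ↔ (permGraph σ).Adj i j := by
  simp only [permGraph_adj, hi, hj]

end PermGraph

namespace PermTypeIIAt

variable {n : ℕ} {σ τ : Equiv.Perm (Fin n)} {p q x : Fin n}

theorem apply_left (h : PermTypeIIAt σ τ p q) : τ p = σ q := by
  simp [h.2.2.2]

theorem apply_right (h : PermTypeIIAt σ τ p q) : τ q = σ p := by
  simp [h.2.2.2]

theorem apply_of_ne (h : PermTypeIIAt σ τ p q) (hp : x ≠ p) (hq : x ≠ q) : τ x = σ x := by
  simp [h.2.2.2, Equiv.swap_apply_of_ne_of_ne hp hq]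

theorem adj_left_right (h : PermTypeIIAt σ τ p q) : (permGraph τ).Adj p q :=
  permGraph_adj_of_lt h.1 (by rw [h.apply_left, h.apply_right]; exact h.2.1)

theorem not_adj_left_right (h : PermTypeIIAt σ τ p q) : ¬(permGraph σ).Adj p q := by
  rw [permGraph_adj]
  rintro (⟨-, hσ⟩ | ⟨hqp, -⟩)
  exacts [hσ.not_gt h.2.1, hqp.not_gt h.1]

theorem reachable_of_adj_left (h : PermTypeIIAt σ τ p q) (hx : (permGraph σ).Adj p x) :
    (permGraph τ).Reachable p x := by
  have hxq : x ≠ q := by rintro rfl; exact h.not_adj_left_right hx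
  rcases permGraph_adj.1 hx with ⟨hpx, hσ⟩ | ⟨hxp, hσ⟩
  · refine (permGraph_adj_of_lt hpx ?_).reachable
    rw [h.apply_left, h.apply_of_ne hpx.ne' hxq]
    exact hσ.trans h.2.1
  · have hxq' : (permGraph τ).Adj x q := permGraph_adj_of_lt (hxp.trans h.1)
      (by rw [h.apply_right, h.apply_of_ne hxp.ne hxq]; exact hσ)
    exact h.adj_left_right.reachable.trans hxq'.reachable.symm

theorem adj_of_adj_right (h : PermTypeIIAt σ τ p q) (hx : (permGraph σ).Adj q x) :
    (permGraph τ).Adj q x := by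
  have hxp : x ≠ p := by rintro rfl; exact h.not_adj_left_right hx.symm
  rcases permGraph_adj.1 hx with ⟨hqx, hσ⟩ | ⟨hxq, hσ⟩
  · refine permGraph_adj_of_lt hqx ?_
    rw [h.apply_right, h.apply_of_ne hxp hqx.ne']
    refine lt_of_le_of_ne (not_lt.1 fun hpx ↦ ?_) (σ.injective.ne hxp)
    -- `σ x` lies strictly between `σ p` and `σ q`, so the move forces `x < q`
    simpa using (h.2.2.1 (σ x) hpx hσ).trans hqx
  · refine (permGraph_adj_of_lt hxq ?_).symm
    rw [h.apply_right, h.apply_of_ne hxp hxq.ne]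
    exact h.2.1.trans hσ

theorem reachable_of_adj (h : PermTypeIIAt σ τ p q) ⦃i j : Fin n⦄
    (hij : (permGraph σ).Adj i j) : (permGraph τ).Reachable i j := by
  by_cases hip : i = p
  · subst hip; exact h.reachable_of_adj_left hij
  by_cases hjp : j = p
  · subst hjp; exact (h.reachable_of_adj_left hij.symm).symm
  by_cases hiq : i = q
  · subst hiq; exact (h.adj_of_adj_right hij).reachable
  by_cases hjq : j = q
  · subst hjq; exact (h.adj_of_adj_right hij.symm).reachable.symm
  exact ((permGraph_adj_congr (h.apply_of_ne hip hiq) (h.apply_of_ne hjp hjq)).2 hij).reachable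

end PermTypeIIAt

/-- Type II moves preserve connectivity in permutation graphs:
if `τ` is obtained from `σ` by a Type II move, then any two vertices joined by
a path in `G_σ` are joined by a path in `G_τ`. -/
theorem typeII_preserves_reachability {n : ℕ} (σ τ : Equiv.Perm (Fin n))
    (h : PermTypeII σ τ) :
    ∀ u v : Fin n, (permGraph σ).Reachable u v → (permGraph τ).Reachable u v := by
  obtain ⟨p, q, hmove⟩ := h
  exact fun _ _ ↦ SimpleGraph.Reachable.mono_of_adj hmove.reachable_of_adj
end

section
/- Let Γ be an intertwined perfect matching on {1,…,2n} and Γ' an intertwined perfect matching on {1,…,2m}. Then Γ can be transformed into Γ' by a finite sequence of Type I moves if and only if the word w_Γ is order isomorphic to a subword of w_{Γ'}, i.e., there exist indices 1 ≤ i_1 < ⋯ < i_n ≤ m such that (w_{Γ'})_{i_j} ≥ (w_Γ)_j for all j, and (w_Γ)_j < (w_Γ)_k ⟺ (w_{Γ'})_{i_j} < (w_{Γ'})_{i_k} for all j, k. -/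
/-- A vertex `v` is *in* the matching `Γ` if it is an endpoint of some edge of `Γ`. -/
def InMatch (Γ : Finset (Sym2 ℕ)) (v : ℕ) : Prop := ∃ e ∈ Γ, v ∈ e

/-- A matching on ℕ: a finite set of edges (unordered pairs of distinct naturals)
that are pairwise vertex-disjoint. -/
def IsMatching (Γ : Finset (Sym2 ℕ)) : Prop :=
  (∀ e ∈ Γ, ¬ e.IsDiag) ∧
    ∀ e ∈ Γ, ∀ f ∈ Γ, e ≠ f → ∀ v : ℕ, v ∈ e → v ∉ f

/-- Type I(a) move: add a single new edge whose endpoints are not in `Γ`. -/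
def TypeIa (Γ Γ' : Finset (Sym2 ℕ)) : Prop :=
  ∃ i j : ℕ, i ≠ j ∧ ¬ InMatch Γ i ∧ ¬ InMatch Γ j ∧ Γ' = insert s(i, j) Γ

/-- Type I(b) move: replace an edge `{i,j}` by `{i,j+1}` when `j+1` is not in `Γ`. -/
def TypeIb (Γ Γ' : Finset (Sym2 ℕ)) : Prop :=
  ∃ i j : ℕ, s(i, j) ∈ Γ ∧ ¬ InMatch Γ (j + 1) ∧
    Γ' = insert s(i, j + 1) (Γ.erase s(i, j))

/-- Type II(a) move. -/
def TypeIIa (Γ Γ' : Finset (Sym2 ℕ)) : Prop :=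
  ∃ a b c d : ℕ, a < b ∧ b < c ∧ c < d ∧ s(a, d) ∈ Γ ∧ s(b, c) ∈ Γ ∧
    (∀ v w : ℕ, a < v → v < b → s(v, w) ∈ Γ → c < w) ∧
    Γ' = insert s(a, c) (insert s(b, d) ((Γ.erase s(a, d)).erase s(b, c)))

/-- Type II(b) move. -/
def TypeIIb (Γ Γ' : Finset (Sym2 ℕ)) : Prop :=
  ∃ a b c d : ℕ, a < b ∧ b < c ∧ c < d ∧ s(a, c) ∈ Γ ∧ s(b, d) ∈ Γ ∧
    (∀ v w : ℕ, b < v → v < c → s(v, w) ∈ Γ → c < w) ∧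
    Γ' = insert s(a, b) (insert s(c, d) ((Γ.erase s(a, c)).erase s(b, d)))

/-- A single move of any type. -/
def MatchStep (Γ Γ' : Finset (Sym2 ℕ)) : Prop :=
  TypeIa Γ Γ' ∨ TypeIb Γ Γ' ∨ TypeIIa Γ Γ' ∨ TypeIIb Γ Γ'

/-- The partial order `⊑`: `Γ ⊑ Γ'` if `Γ'` is obtained from `Γ` by a finite
sequence of Type I and Type II moves. -/
def MatchLe : Finset (Sym2 ℕ) → Finset (Sym2 ℕ) → Prop :=
  Relation.ReflTransGen MatchStep

/-- `Γ` is an intertwined perfect matching on `{1,…,2n}` with matching data `e`: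
`Γ` is a matching whose set of matched vertices is exactly `{1,…,2n}`, and for
each `1 ≤ i ≤ n` the vertex `n+i` is matched to `e i ∈ {1,…,n}`. -/
def IsIntertwined (n : ℕ) (Γ : Finset (Sym2 ℕ)) (e : ℕ → ℕ) : Prop :=
  IsMatching Γ ∧
  (∀ v : ℕ, InMatch Γ v ↔ 1 ≤ v ∧ v ≤ 2 * n) ∧
  (∀ i : ℕ, 1 ≤ i → i ≤ n → 1 ≤ e i ∧ e i ≤ n ∧ s(e i, n + i) ∈ Γ)

/-- The word `w_Γ` of an intertwined perfect matching with matching data `e`: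
the `j`-th letter (0-based) is `e (n − j)`, i.e. `w_Γ = e_n e_{n−1} ⋯ e_1`. -/
def wd (n : ℕ) (e : ℕ → ℕ) : Fin n → ℕ := fun j => e (n - (j : ℕ))

/-- A single Type I move. -/
def TypeIStep (Γ Γ' : Finset (Sym2 ℕ)) : Prop := TypeIa Γ Γ' ∨ TypeIb Γ Γ'

/-!
Both sides are equivalent to the existence of a vertex map `φ` that is strictly increasing on the
vertices of `Γ`, moves none of them down, and sends edges of `Γ` to edges of `Γ'`. A Type Ib move
`{i, j} ↦ {i, j + 1}` provides such a map, and these maps compose. Conversely, let `v` be the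
highest vertex with `v < φ v`: since `φ` is increasing, `v + 1` is free, so moving `v` to `v + 1`
is a Type Ib move, after which `φ` (now sending `v + 1` to `φ v`) has smaller total displacement
`∑ (φ v - v)`. Once `φ` is the identity, `Γ ⊆ Γ'` and the missing edges are added by Type Ia
moves. For intertwined matchings such a `φ` is determined by the images `m + K i` of the vertices
`n + i`, and its three properties become the three conditions on the subword.
-/

open Function Finset

section Matchings

variable {Γ Δ Γ' : Finset (Sym2 ℕ)}

def vertices (Γ : Finset (Sym2 ℕ)) : Finset ℕ := Γ.biUnion Sym2.toFinset

lemma mem_vertices {v : ℕ} : v ∈ vertices Γ ↔ InMatch Γ v := by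
  simp [vertices, InMatch, Sym2.mem_toFinset]

lemma mem_vertices_of_mem {E : Sym2 ℕ} {v : ℕ} (hE : E ∈ Γ) (hv : v ∈ E) : v ∈ vertices Γ :=
  mem_vertices.2 ⟨E, hE, hv⟩

lemma vertices_mono (h : Γ ⊆ Δ) : vertices Γ ⊆ vertices Δ :=
  biUnion_subset_biUnion_of_subset_left _ h

lemma IsMatching.eq_of_mem_of_mem (hΓ : IsMatching Γ) {E F : Sym2 ℕ} (hE : E ∈ Γ) (hF : F ∈ Γ)
    {v : ℕ} (hvE : v ∈ E) (hvF : v ∈ F) : E = F :=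
  by_contra fun hEF => hΓ.2 E hE F hF hEF v hvE hvF

lemma IsMatching.ne_of_mk_mem (hΓ : IsMatching Γ) {a b : ℕ} (h : s(a, b) ∈ Γ) : a ≠ b :=
  fun hab => hΓ.1 _ h (Sym2.mk_isDiag_iff.2 hab)

lemma IsMatching.subset (hΓ : IsMatching Γ) (h : Δ ⊆ Γ) : IsMatching Δ :=
  ⟨fun E hE => hΓ.1 E (h hE), fun E hE F hF => hΓ.2 E (h hE) F (h hF)⟩

lemma IsMatching.insert_of_free (hΓ : IsMatching Γ) {E : Sym2 ℕ} (hE : ¬ E.IsDiag)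
    (hfree : ∀ v ∈ E, v ∉ vertices Γ) : IsMatching (insert E Γ) := by
  refine ⟨fun F hF => ?_, fun F hF G hG hFG v hvF hvG => ?_⟩
  · rcases mem_insert.1 hF with rfl | hF
    exacts [hE, hΓ.1 F hF]
  rcases mem_insert.1 hF with rfl | hFΓ <;> rcases mem_insert.1 hG with rfl | hGΓ
  · exact hFG rfl
  · exact hfree v hvF (mem_vertices_of_mem hGΓ hvG)
  · exact hfree v hvG (mem_vertices_of_mem hFΓ hvF)
  · exact hΓ.2 F hFΓ G hGΓ hFG v hvF hvG

lemma IsMatching.mem_vertices_erase (hΓ : IsMatching Γ) {E : Sym2 ℕ} (hE : E ∈ Γ) {v : ℕ} :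
    v ∈ vertices (Γ.erase E) ↔ v ∈ vertices Γ ∧ v ∉ E := by
  simp only [mem_vertices, InMatch, mem_erase]
  constructor
  · rintro ⟨F, ⟨hFE, hF⟩, hvF⟩
    exact ⟨⟨F, hF, hvF⟩, fun hvE => hFE (hΓ.eq_of_mem_of_mem hF hE hvF hvE)⟩
  · rintro ⟨⟨F, hF, hvF⟩, hvE⟩
    exact ⟨F, ⟨by rintro rfl; exact hvE hvF, hF⟩, hvF⟩

lemma exists_mk_mem_of_mem_vertices {v : ℕ} (hv : v ∈ vertices Γ) : ∃ u, s(u, v) ∈ Γ := by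
  obtain ⟨E, hE, hvE⟩ := mem_vertices.1 hv
  obtain ⟨u, rfl⟩ := Sym2.mem_iff_exists.1 hvE
  exact ⟨u, Sym2.eq_swap ▸ hE⟩

end Matchings

lemma Sym2.map_update_of_not_mem {α β : Type*} [DecidableEq α] {f : α → β} {a : α} {b : β}
    {E : Sym2 α} (h : a ∉ E) :
    E.map (update f a b) = E.map f :=
  Sym2.map_congr fun _ hx => update_of_ne (ne_of_mem_of_not_mem hx h) _ _

section Moves

variable {Γ Γ' : Finset (Sym2 ℕ)}

lemma IsMatching.insert_erase_succ (hΓ : IsMatching Γ) {i j : ℕ} (h : s(i, j) ∈ Γ)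
    (hj : j + 1 ∉ vertices Γ) : IsMatching (insert s(i, j + 1) (Γ.erase s(i, j))) := by
  have hi : i ∉ vertices (Γ.erase s(i, j)) := fun hi =>
    ((hΓ.mem_vertices_erase h).1 hi).2 (Sym2.mem_mk_left i j)
  have hij : i ≠ j + 1 := by
    rintro rfl
    exact hj (mem_vertices_of_mem h (Sym2.mem_mk_left _ _))
  refine (hΓ.subset (erase_subset _ _)).insert_of_free (Sym2.mk_isDiag_iff.not.2 hij) ?_
  rintro v hv
  rcases Sym2.mem_iff.1 hv with rfl | rfl
  exacts [hi, fun hv' => hj (vertices_mono (erase_subset _ _) hv')]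

lemma IsMatching.typeIStep (hΓ : IsMatching Γ) (h : TypeIStep Γ Γ') : IsMatching Γ' := by
  rcases h with ⟨i, j, hij, hi, hj, rfl⟩ | ⟨i, j, hmem, hj, rfl⟩
  · refine hΓ.insert_of_free (Sym2.mk_isDiag_iff.not.2 hij) fun v hv => ?_
    rcases Sym2.mem_iff.1 hv with rfl | rfl <;> rwa [mem_vertices]
  · exact hΓ.insert_erase_succ hmem (mt mem_vertices.1 hj)

lemma IsMatching.reflTransGen (hΓ : IsMatching Γ) (h : Relation.ReflTransGen TypeIStep Γ Γ') :
    IsMatching Γ' := by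
  induction h with
  | refl => exact hΓ
  | tail _ hstep ih => exact ih.typeIStep hstep

end Moves

def IsRaisingOn (φ : ℕ → ℕ) (s : Set ℕ) : Prop := StrictMonoOn φ s ∧ ∀ v ∈ s, v ≤ φ v

def Embeds (Γ Γ' : Finset (Sym2 ℕ)) : Prop :=
  ∃ φ : ℕ → ℕ, IsRaisingOn φ (vertices Γ) ∧ Γ.image (Sym2.map φ) ⊆ Γ'

section Embeds

variable {Γ Δ Γ' : Finset (Sym2 ℕ)}

lemma apply_mem_vertices_image {φ : ℕ → ℕ} {v : ℕ} (hv : v ∈ vertices Γ) :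
    φ v ∈ vertices (Γ.image (Sym2.map φ)) := by
  obtain ⟨E, hE, hvE⟩ := mem_vertices.1 hv
  exact mem_vertices_of_mem (mem_image_of_mem _ hE) (Sym2.mem_map.2 ⟨v, hvE, rfl⟩)

lemma Embeds.refl (Γ : Finset (Sym2 ℕ)) : Embeds Γ Γ :=
  ⟨id, ⟨strictMonoOn_id, fun _ _ => le_rfl⟩, by simp⟩

lemma Embeds.trans (h₁ : Embeds Γ Δ) (h₂ : Embeds Δ Γ') : Embeds Γ Γ' := by
  obtain ⟨φ, ⟨hφ, hφ_le⟩, hφΔ⟩ := h₁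
  obtain ⟨ψ, ⟨hψ, hψ_le⟩, hψΓ'⟩ := h₂
  have hmaps : Set.MapsTo φ (vertices Γ) (vertices Δ) := fun v hv =>
    vertices_mono hφΔ (apply_mem_vertices_image hv)
  refine ⟨ψ ∘ φ, ⟨hψ.comp hφ hmaps, fun v hv => (hφ_le v hv).trans (hψ_le _ (hmaps hv))⟩, ?_⟩
  calc Γ.image (Sym2.map (ψ ∘ φ)) = (Γ.image (Sym2.map φ)).image (Sym2.map ψ) := by
        simp only [image_image, Sym2.map_comp]
    _ ⊆ Γ' := (image_subset_image hφΔ).trans hψΓ'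

lemma strictMonoOn_update_id_succ {s : Set ℕ} {j : ℕ} (h : j + 1 ∉ s) :
    StrictMonoOn (update id j (j + 1)) s := by
  intro x hx y hy hxy
  have hx' : x ≠ j + 1 := ne_of_mem_of_not_mem hx h
  have hy' : y ≠ j + 1 := ne_of_mem_of_not_mem hy h
  simp only [update_apply, id]
  split_ifs <;> omega

lemma embeds_of_typeIStep (hΓ : IsMatching Γ) (h : TypeIStep Γ Γ') : Embeds Γ Γ' := by
  rcases h with ⟨i, j, -, -, -, rfl⟩ | ⟨i, j, hmem, hj, rfl⟩
  · exact ⟨id, ⟨strictMonoOn_id, fun _ _ => le_rfl⟩, by simp [subset_insert]⟩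
  have hj' : j + 1 ∉ (vertices Γ : Set ℕ) := mt mem_vertices.1 hj
  refine ⟨update id j (j + 1), ⟨strictMonoOn_update_id_succ hj', fun v _ => ?_⟩, ?_⟩
  · simp only [update_apply, id]
    split_ifs <;> omega
  rintro _ hE'
  obtain ⟨E, hE, rfl⟩ := mem_image.1 hE'
  by_cases hjE : j ∈ E
  · obtain rfl := hΓ.eq_of_mem_of_mem hE hmem hjE (Sym2.mem_mk_right i j)
    have hij : i ≠ j := hΓ.ne_of_mk_mem hE
    simp [update_of_ne hij]
  · have hE_ne : E ≠ s(i, j) := by rintro rfl; exact hjE (Sym2.mem_mk_right i j)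
    rw [Sym2.map_update_of_not_mem hjE, Sym2.map_id, id]
    exact mem_insert_of_mem (mem_erase.2 ⟨hE_ne, hE⟩)

lemma embeds_of_reflTransGen (hΓ : IsMatching Γ) (h : Relation.ReflTransGen TypeIStep Γ Γ') :
    Embeds Γ Γ' := by
  induction h with
  | refl => exact Embeds.refl Γ
  | tail hreach hstep ih => exact ih.trans (embeds_of_typeIStep (hΓ.reflTransGen hreach) hstep)

end Embeds

section Reachability

variable {Γ Δ Γ' : Finset (Sym2 ℕ)}

lemma typeIStep_insert (hΓ' : IsMatching Γ') (hΔ : Δ ⊆ Γ') {E : Sym2 ℕ} (hE : E ∈ Γ')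
    (hEΔ : E ∉ Δ) : TypeIStep Δ (insert E Δ) := by
  induction E using Sym2.ind with | _ a b =>
  have hfree : ∀ v ∈ s(a, b), ¬ InMatch Δ v := by
    rintro v hv ⟨F, hF, hvF⟩
    exact hEΔ (hΓ'.eq_of_mem_of_mem (hΔ hF) hE hvF hv ▸ hF)
  exact Or.inl ⟨a, b, hΓ'.ne_of_mk_mem hE, hfree a (Sym2.mem_mk_left a b),
    hfree b (Sym2.mem_mk_right a b), rfl⟩

lemma reflTransGen_of_subset (hΓ' : IsMatching Γ') (h : Δ ⊆ Γ') :
    Relation.ReflTransGen TypeIStep Δ Γ' := by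
  suffices ∀ S ⊆ Γ', Relation.ReflTransGen TypeIStep Δ (Δ ∪ S) by
    simpa [union_eq_right.2 h] using this Γ' subset_rfl
  intro S
  induction S using Finset.induction_on with
  | empty => intro _; rw [union_empty]
  | insert E S _ ih =>
    intro hES
    have hS : S ⊆ Γ' := (subset_insert E S).trans hES
    rw [union_insert]
    by_cases hE : E ∈ Δ ∪ S
    · rw [insert_eq_of_mem hE]
      exact ih hS
    · exact (ih hS).tail
        (typeIStep_insert hΓ' (union_subset h hS) (hES (mem_insert_self E S)) hE)

def displacement (Γ : Finset (Sym2 ℕ)) (φ : ℕ → ℕ) : ℕ := ∑ v ∈ vertices Γ, (φ v - v)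

lemma IsRaisingOn.update_succ {φ : ℕ → ℕ} {s : Set ℕ} {v : ℕ} (hφ : IsRaisingOn φ s) (hv : v ∈ s)
    (hlt : v < φ v) (hv₁ : v + 1 ∉ s) :
    IsRaisingOn (update φ (v + 1) (φ v)) (insert (v + 1) (s \ {v})) := by
  have hupdate : ∀ x ∈ s \ {v}, update φ (v + 1) (φ v) x = φ x := fun x hx =>
    update_of_ne (ne_of_mem_of_not_mem hx.1 hv₁) _ _
  refine ⟨fun x hx y hy hxy => ?_, fun x hx => ?_⟩
  · rcases hx with rfl | hx <;> rcases hy with rfl | hy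
    · exact absurd hxy (lt_irrefl _)
    · rw [update_self, hupdate y hy]
      have hyv : y ≠ v := hy.2
      exact hφ.1 hv hy.1 (by omega)
    · rw [update_self, hupdate x hx]
      have hxv : x ≠ v := hx.2
      exact hφ.1 hx.1 hv (by omega)
    · rw [hupdate x hx, hupdate y hy]
      exact hφ.1 hx.1 hy.1 hxy
  · rcases hx with rfl | hx
    · rw [update_self]
      exact hlt
    · rw [hupdate x hx]
      exact hφ.2 x hx.1

section Step

variable {φ : ℕ → ℕ} {u v : ℕ}

lemma vertices_insert_erase_succ (hΓ : IsMatching Γ) (huv : s(u, v) ∈ Γ) :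
    vertices (insert s(u, v + 1) (Γ.erase s(u, v))) = insert (v + 1) ((vertices Γ).erase v) := by
  have hu : u ∈ vertices Γ := mem_vertices_of_mem huv (Sym2.mem_mk_left u v)
  have hne : u ≠ v := hΓ.ne_of_mk_mem huv
  ext x
  simp only [vertices, biUnion_insert, mem_union, Sym2.mem_toFinset, Sym2.mem_iff, mem_insert,
    mem_erase]
  rw [← vertices, hΓ.mem_vertices_erase huv, Sym2.mem_iff]
  by_cases hxu : x = u
  · subst hxu; tauto
  · tauto

lemma image_insert_erase_succ (huv : s(u, v) ∈ Γ) (hv₁ : v + 1 ∉ vertices Γ) :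
    (insert s(u, v + 1) (Γ.erase s(u, v))).image (Sym2.map (update φ (v + 1) (φ v))) =
      Γ.image (Sym2.map φ) := by
  have hu : u ≠ v + 1 := ne_of_mem_of_not_mem (mem_vertices_of_mem huv (Sym2.mem_mk_left u v)) hv₁
  have hrest : ∀ E ∈ Γ.erase s(u, v), E.map (update φ (v + 1) (φ v)) = E.map φ := fun E hE =>
    Sym2.map_update_of_not_mem fun hvE => hv₁ (mem_vertices_of_mem (mem_of_mem_erase hE) hvE)
  conv_rhs => rw [← insert_erase huv]
  rw [image_insert, image_insert, image_congr hrest, Sym2.map_mk, Sym2.map_mk, update_self,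
    update_of_ne hu]

lemma displacement_insert_erase_succ_lt (hΓ : IsMatching Γ) (huv : s(u, v) ∈ Γ)
    (hv₁ : v + 1 ∉ vertices Γ) (hlt : v < φ v) :
    displacement (insert s(u, v + 1) (Γ.erase s(u, v))) (update φ (v + 1) (φ v)) <
      displacement Γ φ := by
  have hv : v ∈ vertices Γ := mem_vertices_of_mem huv (Sym2.mem_mk_right u v)
  have hrest : ∀ x ∈ (vertices Γ).erase v, update φ (v + 1) (φ v) x - x = φ x - x := fun x hx =>
    by rw [update_of_ne (ne_of_mem_of_not_mem (mem_of_mem_erase hx) hv₁)]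
  rw [displacement, displacement, vertices_insert_erase_succ hΓ huv,
    sum_insert fun h => hv₁ (mem_of_mem_erase h), update_self, sum_congr rfl hrest,
    ← add_sum_erase _ _ hv]
  omega

end Step

lemma image_map_eq_self {φ : ℕ → ℕ} (h : ∀ v ∈ vertices Γ, φ v = v) :
    Γ.image (Sym2.map φ) = Γ :=
  calc Γ.image (Sym2.map φ) = Γ.image (Sym2.map id) :=
        image_congr fun E hE => Sym2.map_congr fun v hv => h v (mem_vertices_of_mem hE hv)
    _ = Γ := by simp

lemma reflTransGen_image {φ : ℕ → ℕ} (hΓ : IsMatching Γ) (hφ : IsRaisingOn φ (vertices Γ)) :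
    Relation.ReflTransGen TypeIStep Γ (Γ.image (Sym2.map φ)) := by
  induction hN : displacement Γ φ using Nat.strong_induction_on generalizing Γ φ with
  | _ N ih =>
  subst hN
  by_cases hD : ((vertices Γ).filter fun v => v < φ v).Nonempty
  · obtain ⟨v, hv, hmax⟩ := exists_max_image _ id hD
    rw [mem_filter] at hv
    obtain ⟨u, huv⟩ := exists_mk_mem_of_mem_vertices hv.1
    have hv₁ : v + 1 ∉ vertices Γ := fun hv₁ => by
      have hlt : φ v < φ (v + 1) := hφ.1 hv.1 hv₁ v.lt_succ_self
      exact Nat.not_succ_le_self v (hmax (v + 1) (mem_filter.2 ⟨hv₁, by omega⟩))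
    have hφ₁ : IsRaisingOn (update φ (v + 1) (φ v))
        (vertices (insert s(u, v + 1) (Γ.erase s(u, v)))) := by
      rw [vertices_insert_erase_succ hΓ huv, coe_insert, coe_erase]
      exact hφ.update_succ hv.1 hv.2 hv₁
    rw [← image_insert_erase_succ huv hv₁]
    exact .head (Or.inr ⟨u, v, huv, mt mem_vertices.2 hv₁, rfl⟩)
      (ih _ (displacement_insert_erase_succ_lt hΓ huv hv₁ hv.2) (hΓ.insert_erase_succ huv hv₁)
        hφ₁ rfl)
  · rw [image_map_eq_self fun v hv =>
      (hφ.2 v hv).antisymm' (not_lt.1 fun hlt => hD ⟨v, mem_filter.2 ⟨hv, hlt⟩⟩)]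

lemma reflTransGen_of_embeds (hΓ : IsMatching Γ) (hΓ' : IsMatching Γ') (h : Embeds Γ Γ') :
    Relation.ReflTransGen TypeIStep Γ Γ' :=
  let ⟨_, hφ, hsub⟩ := h
  (reflTransGen_image hΓ hφ).trans (reflTransGen_of_subset hΓ' hsub)

theorem reflTransGen_typeIStep_iff_embeds (hΓ : IsMatching Γ) (hΓ' : IsMatching Γ') :
    Relation.ReflTransGen TypeIStep Γ Γ' ↔ Embeds Γ Γ' :=
  ⟨embeds_of_reflTransGen hΓ, reflTransGen_of_embeds hΓ hΓ'⟩

end Reachability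

/-- `K i` is the position in `e'` that receives the letter `e i`. Positions are numbered
`1, …, n` as in the matching data, whereas the words `wd` read them backwards. -/
def IsDominatingOccurrence (n m : ℕ) (e e' : ℕ → ℕ) (K : ℕ → ℕ) : Prop :=
  Set.MapsTo K (Set.Icc 1 n) (Set.Icc 1 m) ∧ StrictMonoOn K (Set.Icc 1 n) ∧
    (∀ i ∈ Set.Icc 1 n, e i ≤ e' (K i)) ∧
    ∀ i ∈ Set.Icc 1 n, ∀ j ∈ Set.Icc 1 n, e i < e j ↔ e' (K i) < e' (K j)

lemma le_apply_of_strictMonoOn_Icc {n : ℕ} {K : ℕ → ℕ} (hK : StrictMonoOn K (Set.Icc 1 n))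
    (hpos : ∀ i ∈ Set.Icc 1 n, 1 ≤ K i) : ∀ i ∈ Set.Icc 1 n, i ≤ K i := by
  intro i hi
  induction i with
  | zero => exact absurd hi.1 (by norm_num)
  | succ i ih =>
    rcases Nat.eq_zero_or_pos i with rfl | hi₀
    · exact hpos 1 hi
    · have hi' : i ∈ Set.Icc 1 n := ⟨hi₀, by have := hi.2; omega⟩
      have := hK hi' hi (lt_add_one i)
      have := ih hi'
      omega

section Intertwined

variable {n m : ℕ} {Γ Γ' : Finset (Sym2 ℕ)} {e e' : ℕ → ℕ}

lemma IsIntertwined.mapsTo (h : IsIntertwined n Γ e) : Set.MapsTo e (Set.Icc 1 n) (Set.Icc 1 n) :=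
  fun i hi => ⟨(h.2.2 i hi.1 hi.2).1, (h.2.2 i hi.1 hi.2).2.1⟩

lemma IsIntertwined.mk_mem (h : IsIntertwined n Γ e) {i : ℕ} (hi : i ∈ Set.Icc 1 n) :
    s(e i, n + i) ∈ Γ :=
  (h.2.2 i hi.1 hi.2).2.2

lemma IsIntertwined.coe_vertices (h : IsIntertwined n Γ e) :
    (vertices Γ : Set ℕ) = Set.Icc 1 (2 * n) :=
  Set.ext fun v => mem_vertices.trans (h.2.1 v)

lemma IsIntertwined.injOn (h : IsIntertwined n Γ e) : Set.InjOn e (Set.Icc 1 n) := by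
  intro i hi j hj hij
  have hEq := h.1.eq_of_mem_of_mem (h.mk_mem hi) (h.mk_mem hj) (Sym2.mem_mk_left _ _)
    (hij ▸ Sym2.mem_mk_left _ _)
  have := (h.mapsTo hi).2
  have := hj.1
  rcases Sym2.eq_iff.1 hEq with ⟨-, h'⟩ | ⟨h', -⟩ <;> omega

lemma IsIntertwined.surjOn (h : IsIntertwined n Γ e) : Set.SurjOn e (Set.Icc 1 n) (Set.Icc 1 n) :=
  (((Set.finite_Icc 1 n).injOn_iff_bijOn_of_mapsTo h.mapsTo).1 h.injOn).surjOn

lemma IsIntertwined.exists_of_mem_Icc (h : IsIntertwined n Γ e) {v : ℕ}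
    (hv : v ∈ Set.Icc 1 (2 * n)) : ∃ i ∈ Set.Icc 1 n, v = e i ∨ v = n + i := by
  by_cases hvn : v ≤ n
  · obtain ⟨i, hi, rfl⟩ := h.surjOn ⟨hv.1, hvn⟩
    exact ⟨i, hi, Or.inl rfl⟩
  · exact ⟨v - n, ⟨by omega, by have := hv.2; omega⟩, Or.inr (by omega)⟩

lemma IsIntertwined.exists_eq_mk (h : IsIntertwined n Γ e) {E : Sym2 ℕ} (hE : E ∈ Γ) :
    ∃ i ∈ Set.Icc 1 n, E = s(e i, n + i) := by
  induction E using Sym2.ind with | _ a b =>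
  have ha : a ∈ Set.Icc 1 (2 * n) := h.coe_vertices ▸ mem_vertices_of_mem hE (Sym2.mem_mk_left a b)
  obtain ⟨i, hi, hai⟩ := h.exists_of_mem_Icc ha
  exact ⟨i, hi, h.1.eq_of_mem_of_mem hE (h.mk_mem hi) (Sym2.mem_mk_left a b) (Sym2.mem_iff.2 hai)⟩

lemma IsIntertwined.exists_of_mk_mem (h : IsIntertwined n Γ e) {a b : ℕ} (hE : s(a, b) ∈ Γ)
    (hab : a < b) : ∃ i ∈ Set.Icc 1 n, a = e i ∧ b = n + i := by
  obtain ⟨i, hi, hEq⟩ := h.exists_eq_mk hE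
  have := (h.mapsTo hi).2
  rcases Sym2.eq_iff.1 hEq with hEq | ⟨ha, hb⟩
  · exact ⟨i, hi, hEq⟩
  · omega

lemma IsIntertwined.exists_isDominatingOccurrence (hΓ : IsIntertwined n Γ e)
    (hΓ' : IsIntertwined m Γ' e') (h : Embeds Γ Γ') : ∃ K, IsDominatingOccurrence n m e e' K := by
  obtain ⟨φ, ⟨hφ, hφ_le⟩, hsub⟩ := h
  rw [hΓ.coe_vertices] at hφ hφ_le
  have hlow : ∀ i ∈ Set.Icc 1 n, e i ∈ Set.Icc 1 (2 * n) := fun i hi =>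
    ⟨(hΓ.mapsTo hi).1, by have := (hΓ.mapsTo hi).2; omega⟩
  have hhigh : ∀ i ∈ Set.Icc 1 n, n + i ∈ Set.Icc 1 (2 * n) := fun i hi =>
    ⟨by have := hi.1; omega, by have := hi.2; omega⟩
  let K : ℕ → ℕ := fun i => φ (n + i) - m
  have hK : ∀ i ∈ Set.Icc 1 n, K i ∈ Set.Icc 1 m ∧ φ (e i) = e' (K i) ∧ φ (n + i) = m + K i := by
    intro i hi
    have hlt : φ (e i) < φ (n + i) :=
      hφ (hlow i hi) (hhigh i hi) (by have := (hΓ.mapsTo hi).2; have := hi.1; omega)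
    obtain ⟨k, hk, hek, hmk⟩ :=
      hΓ'.exists_of_mk_mem (hsub (mem_image_of_mem _ (hΓ.mk_mem hi))) hlt
    simpa [K, hmk, hek] using hk
  refine ⟨K, fun i hi => (hK i hi).1, fun i hi j hj hij => ?_,
    fun i hi => (hK i hi).2.1 ▸ hφ_le _ (hlow i hi), fun i hi j hj => ?_⟩
  · have := hφ (hhigh i hi) (hhigh j hj) (by omega)
    have := (hK i hi).2.2
    have := (hK j hj).2.2
    omega
  · rw [← (hK i hi).2.1, ← (hK j hj).2.1]
    exact (hφ.lt_iff_lt (hlow i hi) (hlow j hj)).symm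

lemma IsIntertwined.embeds_of_isDominatingOccurrence (hΓ : IsIntertwined n Γ e)
    (hΓ' : IsIntertwined m Γ' e') {K : ℕ → ℕ} (hK : IsDominatingOccurrence n m e e' K) :
    Embeds Γ Γ' := by
  obtain ⟨hmaps, hmono, hdom, hiso⟩ := hK
  have hle : ∀ i ∈ Set.Icc 1 n, i ≤ K i :=
    le_apply_of_strictMonoOn_Icc hmono fun i hi => (hmaps hi).1
  let φ : ℕ → ℕ := fun v =>
    if v ≤ n then e' (K (invFunOn e (Set.Icc 1 n) v)) else m + K (v - n)
  have hφ_low : ∀ i ∈ Set.Icc 1 n, φ (e i) = e' (K i) := fun i hi => by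
    simp only [φ, if_pos (hΓ.mapsTo hi).2, hΓ.injOn.leftInvOn_invFunOn hi]
  have hφ_high : ∀ i ∈ Set.Icc 1 n, φ (n + i) = m + K i := fun i hi => by
    simp only [φ, if_neg (by have := hi.1; omega : ¬ n + i ≤ n), Nat.add_sub_cancel_left]
  refine ⟨φ, ⟨?_, ?_⟩, ?_⟩
  · rw [hΓ.coe_vertices]
    intro x hx y hy hxy
    obtain ⟨i, hi, rfl | rfl⟩ := hΓ.exists_of_mem_Icc hx <;>
      obtain ⟨j, hj, rfl | rfl⟩ := hΓ.exists_of_mem_Icc hy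
    · rw [hφ_low i hi, hφ_low j hj]
      exact (hiso i hi j hj).1 hxy
    · rw [hφ_low i hi, hφ_high j hj]
      have := (hΓ'.mapsTo (hmaps hi)).2
      have := (hmaps hj).1
      omega
    · have := (hΓ.mapsTo hj).2
      omega
    · rw [hφ_high i hi, hφ_high j hj]
      have := hmono hi hj (by omega)
      omega
  · rw [hΓ.coe_vertices]
    intro x hx
    obtain ⟨i, hi, rfl | rfl⟩ := hΓ.exists_of_mem_Icc hx
    · rw [hφ_low i hi]
      exact hdom i hi
    · rw [hφ_high i hi]
      have := hle i hi
      have := hle n ⟨hi.1.trans hi.2, le_rfl⟩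
      have := (hmaps (⟨hi.1.trans hi.2, le_rfl⟩ : n ∈ Set.Icc 1 n)).2
      omega
  · rintro _ hE'
    obtain ⟨E, hE, rfl⟩ := mem_image.1 hE'
    obtain ⟨i, hi, rfl⟩ := hΓ.exists_eq_mk hE
    rw [Sym2.map_mk, hφ_low i hi, hφ_high i hi]
    exact hΓ'.mk_mem (hmaps hi)

lemma IsIntertwined.embeds_iff (hΓ : IsIntertwined n Γ e) (hΓ' : IsIntertwined m Γ' e') :
    Embeds Γ Γ' ↔ ∃ K, IsDominatingOccurrence n m e e' K :=
  ⟨hΓ.exists_isDominatingOccurrence hΓ', fun ⟨_, hK⟩ => hΓ.embeds_of_isDominatingOccurrence hΓ' hK⟩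

end Intertwined

section Words

variable {n m : ℕ} {e e' : ℕ → ℕ}

lemma IsDominatingOccurrence.exists_subword {K : ℕ → ℕ} (hK : IsDominatingOccurrence n m e e' K) :
    ∃ g : Fin n → Fin m, StrictMono g ∧
      (∀ j : Fin n, wd n e j ≤ wd m e' (g j)) ∧
      (∀ j k : Fin n, wd n e j < wd n e k ↔ wd m e' (g j) < wd m e' (g k)) := by
  obtain ⟨hmaps, hmono, hdom, hiso⟩ := hK
  have hrev : ∀ j : Fin n, n - (j : ℕ) ∈ Set.Icc 1 n := fun j => ⟨by omega, by omega⟩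
  let g : Fin n → Fin m := fun j =>
    ⟨m - K (n - j), by have := (hmaps (hrev j)).1; have := (hmaps (hrev j)).2; omega⟩
  have hwd : ∀ j, wd m e' (g j) = e' (K (n - j)) := fun j => by
    have := (hmaps (hrev j)).2
    simp only [wd, g, Nat.sub_sub_self this]
  refine ⟨g, fun j k hjk => ?_, fun j => (hwd j).symm ▸ hdom _ (hrev j),
    fun j k => (hwd j).symm ▸ (hwd k).symm ▸ hiso _ (hrev j) _ (hrev k)⟩
  have := hmono (hrev k) (hrev j) (by have := k.isLt; rw [Fin.lt_def] at hjk; omega)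
  have := (hmaps (hrev j)).2
  rw [Fin.lt_def]
  show m - K (n - j) < m - K (n - k)
  omega

lemma exists_isDominatingOccurrence_of_subword {g : Fin n → Fin m} (hg : StrictMono g)
    (hdom : ∀ j : Fin n, wd n e j ≤ wd m e' (g j))
    (hiso : ∀ j k : Fin n, wd n e j < wd n e k ↔ wd m e' (g j) < wd m e' (g k)) :
    ∃ K, IsDominatingOccurrence n m e e' K := by
  let rev : ∀ i ∈ Set.Icc 1 n, Fin n := fun i hi => ⟨n - i, Nat.sub_lt (hi.1.trans hi.2) hi.1⟩
  let K : ℕ → ℕ := fun i => if hi : i ∈ Set.Icc 1 n then m - g (rev i hi) else 0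
  have hK : ∀ i (hi : i ∈ Set.Icc 1 n), K i = m - g (rev i hi) := fun i hi => dif_pos hi
  have hwd : ∀ i (hi : i ∈ Set.Icc 1 n), wd n e (rev i hi) = e i := fun i hi => by
    simp only [wd, rev, Nat.sub_sub_self hi.2]
  have hwd' : ∀ i (hi : i ∈ Set.Icc 1 n), wd m e' (g (rev i hi)) = e' (K i) := fun i hi => by
    rw [hK i hi]
    rfl
  refine ⟨K, fun i hi => ?_, fun i hi j hj hij => ?_, fun i hi => ?_, fun i hi j hj => ?_⟩
  · have := (g (rev i hi)).isLt
    rw [hK i hi]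
    exact ⟨by omega, by omega⟩
  · have hlt : g (rev j hj) < g (rev i hi) :=
      hg (by rw [Fin.lt_def]; simp only [rev]; have := hj.2; omega)
    have := (g (rev i hi)).isLt
    rw [Fin.lt_def] at hlt
    rw [hK i hi, hK j hj]
    omega
  · rw [← hwd i hi, ← hwd' i hi]
    exact hdom _
  · rw [← hwd i hi, ← hwd j hj, ← hwd' i hi, ← hwd' j hj]
    exact hiso _ _

lemma exists_subword_iff_exists_isDominatingOccurrence :
    (∃ g : Fin n → Fin m, StrictMono g ∧
      (∀ j : Fin n, wd n e j ≤ wd m e' (g j)) ∧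
      (∀ j k : Fin n, wd n e j < wd n e k ↔ wd m e' (g j) < wd m e' (g k))) ↔
      ∃ K, IsDominatingOccurrence n m e e' K :=
  ⟨fun ⟨_, hg, hdom, hiso⟩ => exists_isDominatingOccurrence_of_subword hg hdom hiso,
    fun ⟨_, hK⟩ => hK.exists_subword⟩

end Words

theorem typeI_iff_order_isomorphic_subword_general (n m : ℕ)
    (Γ Γ' : Finset (Sym2 ℕ)) (e e' : ℕ → ℕ)
    (hΓ : IsIntertwined n Γ e) (hΓ' : IsIntertwined m Γ' e') :
    Relation.ReflTransGen TypeIStep Γ Γ' ↔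
      ∃ g : Fin n → Fin m, StrictMono g ∧
        (∀ j : Fin n, wd n e j ≤ wd m e' (g j)) ∧
        (∀ j k : Fin n, wd n e j < wd n e k ↔ wd m e' (g j) < wd m e' (g k)) := by
  rw [reflTransGen_typeIStep_iff_embeds hΓ.1 hΓ'.1, hΓ.embeds_iff hΓ',
    exists_subword_iff_exists_isDominatingOccurrence]

/-- An intertwined perfect matching `Γ` on `{1,…,2n}` (with
word `w_Γ = wd n e`) can be transformed into an intertwined perfect matching
`Γ'` on `{1,…,2m}` (with word `w_{Γ'} = wd m e'`) by a finite sequence of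
Type I moves if and only if `w_Γ` is order isomorphic to a subword of `w_{Γ'}`:
there are positions `g 0 < g 1 < ⋯` with `(w_{Γ'}) (g j) ≥ (w_Γ) j` for all `j`
and `(w_Γ) j < (w_Γ) k ↔ (w_{Γ'}) (g j) < (w_{Γ'}) (g k)` for all `j, k`. -/
theorem typeI_iff_order_isomorphic_subword (n m : ℕ) (hn : 1 ≤ n) (hm : 1 ≤ m)
    (Γ Γ' : Finset (Sym2 ℕ)) (e e' : ℕ → ℕ)
    (hΓ : IsIntertwined n Γ e) (hΓ' : IsIntertwined m Γ' e') :
    Relation.ReflTransGen TypeIStep Γ Γ' ↔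
      ∃ g : Fin n → Fin m, StrictMono g ∧
        (∀ j : Fin n, wd n e j ≤ wd m e' (g j)) ∧
        (∀ j k : Fin n, wd n e j < wd n e k ↔ wd m e' (g j) < wd m e' (g k)) :=
  typeI_iff_order_isomorphic_subword_general n m Γ Γ' e e' hΓ hΓ'
end

section
/- Let Γ and Γ' be intertwined perfect matchings on {1,…,2n}. Then Γ' is obtained from Γ by a single Type II(a) move if and only if the word w_{Γ'} is obtained from w_Γ by swapping two letters a < b such that a occurs before b in w_Γ and every letter c with a < c < b occurs in w_Γ at a position before the position of b. -/
/-!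
The data `e` determines an intertwined matching: `Γ` is exactly the set of edges
`{e k, n + k}`, `1 ≤ k ≤ n`, and conversely `Γ` determines `e` on `[1, n]`. Hence the edges
`{a, d}`, `{b, c}` of a Type II(a) move are `{e i, n + i}`, `{e j, n + j}` with `j < i` and
`e i < e j`, the vertices strictly between `a` and `b` are the letters strictly between them, and
the move replaces the two edges by `{e i, n + j}`, `{e j, n + i}`: the new data is `e ∘ (i j)`.
Reading the data backwards, position `l` of the word carries index `n - l`, which turns these
conditions on indices into the stated conditions on positions.
-/

open Finset

theorem Sym2.mk_add_eq_mk_add_iff {n x y k m : ℕ} (hx : x ≤ n) (hy : y ≤ n) :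
    s(x, n + k) = s(y, n + m) ↔ x = y ∧ k = m := by
  rw [Sym2.eq_iff]
  omega

theorem IsMatching.eq_of_mem_of_mem_s10 {Γ : Finset (Sym2 ℕ)} (hM : IsMatching Γ) {f g : Sym2 ℕ}
    {v : ℕ} (hf : f ∈ Γ) (hg : g ∈ Γ) (hvf : v ∈ f) (hvg : v ∈ g) : f = g :=
  by_contra fun hne => hM.2 f hf g hg hne v hvf hvg

theorem Finset.image_eq_insert_insert_erase_erase {α β : Type*} [DecidableEq α] [DecidableEq β]
    {s : Finset α} {F G : α → β} (hF : Set.InjOn F s) {i j : α} (hi : i ∈ s) (hj : j ∈ s)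
    (hFG : ∀ k ∈ s, k ≠ i → k ≠ j → G k = F k) :
    s.image G = insert (G j) (insert (G i) (((s.image F).erase (F i)).erase (F j))) := by
  ext x
  simp only [mem_insert, mem_erase, mem_image]
  constructor
  · rintro ⟨k, hk, rfl⟩
    by_cases hki : k = i
    · subst hki; tauto
    by_cases hkj : k = j
    · subst hkj; tauto
    refine Or.inr (Or.inr ⟨?_, ?_, k, hk, (hFG k hk hki hkj).symm⟩) <;>
      rw [hFG k hk hki hkj] <;> intro h
    · exact hkj (hF hk hj h)
    · exact hki (hF hk hi h)
  · rintro (rfl | rfl | ⟨hxj, hxi, k, hk, rfl⟩)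
    · exact ⟨j, hj, rfl⟩
    · exact ⟨i, hi, rfl⟩
    · refine ⟨k, hk, hFG k hk ?_ ?_⟩ <;> rintro rfl <;> contradiction

theorem injOn_edge {n : ℕ} {s : Finset ℕ} {f : ℕ → ℕ} (hf : ∀ k ∈ s, f k ≤ n) :
    Set.InjOn (fun k => s(f k, n + k)) s :=
  fun _ hk _ hm h => ((Sym2.mk_add_eq_mk_add_iff (hf _ hk) (hf _ hm)).1 h).2

theorem image_edge_eq_image_edge_iff {n : ℕ} {s : Finset ℕ} {f g : ℕ → ℕ}
    (hf : ∀ k ∈ s, f k ≤ n) (hg : ∀ k ∈ s, g k ≤ n) :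
    s.image (fun k => s(f k, n + k)) = s.image (fun k => s(g k, n + k)) ↔ Set.EqOn f g s := by
  refine ⟨fun h k hk => ?_, fun h => image_congr fun k hk => by simp only [h hk]⟩
  obtain ⟨m, hm, hmk⟩ := mem_image.1 (h ▸ mem_image_of_mem (fun k => s(f k, n + k)) hk)
  obtain ⟨hgf, rfl⟩ := (Sym2.mk_add_eq_mk_add_iff (hg m hm) (hf k hk)).1 hmk
  exact hgf.symm

namespace IsIntertwined

variable {n : ℕ} {Γ : Finset (Sym2 ℕ)} {e : ℕ → ℕ}

theorem mapsTo_s10 (h : IsIntertwined n Γ e) : Set.MapsTo e (Icc 1 n) (Icc 1 n) := fun k hk =>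
  have hk := mem_Icc.1 hk
  mem_Icc.2 ⟨(h.2.2 k hk.1 hk.2).1, (h.2.2 k hk.1 hk.2).2.1⟩

theorem apply_le (h : IsIntertwined n Γ e) {k : ℕ} (hk : k ∈ Icc 1 n) : e k ≤ n :=
  (mem_Icc.1 (h.mapsTo_s10 hk)).2

theorem edge_mem (h : IsIntertwined n Γ e) {k : ℕ} (hk : k ∈ Icc 1 n) : s(e k, n + k) ∈ Γ :=
  (h.2.2 k (mem_Icc.1 hk).1 (mem_Icc.1 hk).2).2.2

theorem injOn_s10 (h : IsIntertwined n Γ e) : Set.InjOn e (Icc 1 n) := fun _ hi _ hj hij =>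
  ((Sym2.mk_add_eq_mk_add_iff (h.apply_le hi) (h.apply_le hj)).1 <|
    h.1.eq_of_mem_of_mem_s10 (h.edge_mem hi) (h.edge_mem hj) (Sym2.mem_mk_left _ _)
      (hij ▸ Sym2.mem_mk_left _ _)).2

theorem surjOn_s10 (h : IsIntertwined n Γ e) : Set.SurjOn e (Icc 1 n) (Icc 1 n) :=
  surjOn_of_injOn_of_card_le e h.mapsTo_s10 h.injOn_s10 le_rfl

theorem exists_edge_mem (h : IsIntertwined n Γ e) {v : ℕ} (hv : InMatch Γ v) :
    ∃ k ∈ Icc 1 n, v ∈ s(e k, n + k) := by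
  obtain ⟨hv1, hv2⟩ := (h.2.1 v).1 hv
  rcases le_or_gt v n with hvn | hvn
  · obtain ⟨k, hk, rfl⟩ := h.surjOn_s10 (mem_Icc.2 ⟨hv1, hvn⟩)
    exact ⟨k, hk, Sym2.mem_mk_left _ _⟩
  · exact ⟨v - n, mem_Icc.2 ⟨by omega, by omega⟩, by simp [Nat.add_sub_cancel' hvn.le]⟩

theorem eq_image (h : IsIntertwined n Γ e) : Γ = (Icc 1 n).image fun k => s(e k, n + k) := by
  refine Subset.antisymm (fun f hf => ?_) (image_subset_iff.2 fun k hk => h.edge_mem hk)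
  obtain ⟨k, hk, hvk⟩ := h.exists_edge_mem ⟨f, hf, f.out_fst_mem⟩
  exact mem_image.2 ⟨k, hk, h.1.eq_of_mem_of_mem_s10 (h.edge_mem hk) hf hvk f.out_fst_mem⟩

theorem mem_iff_of_le (h : IsIntertwined n Γ e) {x y : ℕ} (hx : x ≤ n) :
    s(x, y) ∈ Γ ↔ ∃ k ∈ Icc 1 n, e k = x ∧ n + k = y := by
  rw [h.eq_image, mem_image]
  refine exists_congr fun k => and_congr_right fun hk => ?_
  have := mem_Icc.1 hk
  rw [Sym2.eq_iff]
  omega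

theorem le_of_mem_of_lt (h : IsIntertwined n Γ e) {x y : ℕ} (hxy : x < y)
    (hmem : s(x, y) ∈ Γ) : x ≤ n := by
  rw [h.eq_image, mem_image] at hmem
  obtain ⟨k, hk, hkxy⟩ := hmem
  have := h.apply_le hk
  rw [Sym2.eq_iff] at hkxy
  omega

theorem eq_swap_edges_iff {Γ' : Finset (Sym2 ℕ)} {e' : ℕ → ℕ} (h : IsIntertwined n Γ e)
    (h' : IsIntertwined n Γ' e') {i j : ℕ} (hi : i ∈ Icc 1 n) (hj : j ∈ Icc 1 n) :
    Γ' = insert s(e i, n + j) (insert s(e j, n + i)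
        ((Γ.erase s(e i, n + i)).erase s(e j, n + j))) ↔
      Set.EqOn e' (e ∘ Equiv.swap i j) (Icc 1 n) := by
  have hswap : ∀ k ∈ Icc 1 n, (e ∘ Equiv.swap i j) k ≤ n := fun k hk =>
    h.apply_le (by rw [Equiv.swap_apply_def]; split_ifs <;> assumption)
  have hmove : (Icc 1 n).image (fun k => s((e ∘ Equiv.swap i j) k, n + k)) =
      insert s(e i, n + j) (insert s(e j, n + i)
        ((((Icc 1 n).image fun k => s(e k, n + k)).erase s(e i, n + i)).erase s(e j, n + j))) := by
    rw [image_eq_insert_insert_erase_erase (injOn_edge fun _ => h.apply_le) hi hj]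
    · simp
    · intro k _ hki hkj
      simp [Equiv.swap_apply_of_ne_of_ne hki hkj]
  rw [h'.eq_image, h.eq_image, ← hmove,
    image_edge_eq_image_edge_iff (fun _ => h'.apply_le) hswap]

end IsIntertwined

theorem typeIIa_iff_exists_swap {n : ℕ} {Γ Γ' : Finset (Sym2 ℕ)} {e e' : ℕ → ℕ}
    (hΓ : IsIntertwined n Γ e) (hΓ' : IsIntertwined n Γ' e') :
    TypeIIa Γ Γ' ↔ ∃ i ∈ Icc 1 n, ∃ j ∈ Icc 1 n, j < i ∧ e i < e j ∧
      (∀ m ∈ Icc 1 n, e i < e m → e m < e j → j < m) ∧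
      Set.EqOn e' (e ∘ Equiv.swap i j) (Icc 1 n) := by
  constructor
  · rintro ⟨a, b, c, d, hab, hbc, hcd, had, hbc', hgap, hmove⟩
    obtain ⟨i, hi, rfl, rfl⟩ := (hΓ.mem_iff_of_le (hΓ.le_of_mem_of_lt (by omega) had)).1 had
    obtain ⟨j, hj, rfl, rfl⟩ := (hΓ.mem_iff_of_le (hΓ.le_of_mem_of_lt hbc hbc')).1 hbc'
    refine ⟨i, hi, j, hj, by omega, hab, fun m hm him hmj => ?_,
      (hΓ.eq_swap_edges_iff hΓ' hi hj).1 hmove⟩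
    have := hgap (e m) (n + m) him hmj (hΓ.edge_mem hm)
    omega
  · rintro ⟨i, hi, j, hj, hji, hij, hgap, hswap⟩
    have hjn := hΓ.apply_le hj
    have hj1 := (mem_Icc.1 hj).1
    refine ⟨e i, e j, n + j, n + i, hij, by omega, by omega, hΓ.edge_mem hi, hΓ.edge_mem hj,
      fun v w hiv hvj hvw => ?_, (hΓ.eq_swap_edges_iff hΓ' hi hj).2 hswap⟩
    obtain ⟨m, hm, rfl, rfl⟩ := (hΓ.mem_iff_of_le (by omega)).1 hvw
    have := hgap m hm hiv hvj
    omega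

theorem Set.eqOn_comp_swap_iff {α β : Type*} [DecidableEq α] {f g : α → β} {s : Set α}
    {i j : α} (hi : i ∈ s) (hj : j ∈ s) :
    Set.EqOn g (f ∘ Equiv.swap i j) s ↔
      g i = f j ∧ g j = f i ∧ ∀ k ∈ s, k ≠ i → k ≠ j → g k = f k := by
  constructor
  · intro h
    refine ⟨by simpa using h hi, by simpa using h hj, fun k hk hki hkj => ?_⟩
    simpa [Equiv.swap_apply_of_ne_of_ne hki hkj] using h hk
  · rintro ⟨hgi, hgj, hg⟩ k hk
    rw [Function.comp_apply, Equiv.swap_apply_def]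
    split_ifs with hki hkj
    · rwa [hki]
    · rwa [hkj]
    · exact hg k hk hki hkj

theorem Fin.sub_val_mem_Icc {n : ℕ} (l : Fin n) : n - (l : ℕ) ∈ Icc 1 n :=
  mem_Icc.2 ⟨by omega, by omega⟩

theorem Fin.exists_sub_val_eq {n k : ℕ} (hk : k ∈ Icc 1 n) :
    ∃ l : Fin n, n - (l : ℕ) = k := by
  have := mem_Icc.1 hk
  exact ⟨⟨n - k, by omega⟩, by simp only; omega⟩

theorem exists_word_swap_iff (n : ℕ) (e e' : ℕ → ℕ) :
    (∃ ja jb : Fin n, ja < jb ∧ wd n e ja < wd n e jb ∧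
        (∀ l : Fin n, wd n e ja < wd n e l → wd n e l < wd n e jb → l < jb) ∧
        wd n e' ja = wd n e jb ∧ wd n e' jb = wd n e ja ∧
        (∀ l : Fin n, l ≠ ja → l ≠ jb → wd n e' l = wd n e l)) ↔
      ∃ i ∈ Icc 1 n, ∃ j ∈ Icc 1 n, j < i ∧ e i < e j ∧
        (∀ m ∈ Icc 1 n, e i < e m → e m < e j → j < m) ∧
        e' i = e j ∧ e' j = e i ∧ ∀ k ∈ Icc 1 n, k ≠ i → k ≠ j → e' k = e k := by
  simp only [wd]
  constructor
  · rintro ⟨ja, jb, hlt, hab, hgap, hja, hjb, hrest⟩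
    refine ⟨_, ja.sub_val_mem_Icc, _, jb.sub_val_mem_Icc, by omega, hab, fun m hm ham hmb => ?_,
      hja, hjb, fun k hk hka hkb => ?_⟩
    · obtain ⟨l, rfl⟩ := Fin.exists_sub_val_eq hm
      have := hgap l ham hmb
      omega
    · obtain ⟨l, rfl⟩ := Fin.exists_sub_val_eq hk
      exact hrest l (by rintro rfl; exact hka rfl) (by rintro rfl; exact hkb rfl)
  · rintro ⟨i, hi, j, hj, hji, hij, hgap, hi', hj', hrest⟩
    obtain ⟨ja, rfl⟩ := Fin.exists_sub_val_eq hi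
    obtain ⟨jb, rfl⟩ := Fin.exists_sub_val_eq hj
    refine ⟨ja, jb, by omega, hij, fun l hal hlb => ?_, hi', hj', fun l hla hlb => ?_⟩
    · have := hgap _ l.sub_val_mem_Icc hal hlb
      omega
    · exact hrest _ l.sub_val_mem_Icc (fun h => hla (by omega)) (fun h => hlb (by omega))

/-- For intertwined perfect matchings `Γ, Γ'` on `{1,…,2n}`
(with words `wd n e` and `wd n e'`), `Γ'` is obtained from `Γ` by a single
Type II(a) move if and only if `w_{Γ'}` is obtained from `w_Γ` by swapping two
letters `a < b` such that `a` occurs before `b` in `w_Γ` and every letter `c`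
with `a < c < b` occurs in `w_Γ` at a position before the position of `b`. -/
theorem typeIIa_iff_word_swap (n : ℕ)
    (Γ Γ' : Finset (Sym2 ℕ)) (e e' : ℕ → ℕ)
    (hΓ : IsIntertwined n Γ e) (hΓ' : IsIntertwined n Γ' e') :
    TypeIIa Γ Γ' ↔
      ∃ ja jb : Fin n, ja < jb ∧ wd n e ja < wd n e jb ∧
        (∀ l : Fin n, wd n e ja < wd n e l → wd n e l < wd n e jb → l < jb) ∧
        wd n e' ja = wd n e jb ∧ wd n e' jb = wd n e ja ∧
        (∀ l : Fin n, l ≠ ja → l ≠ jb → wd n e' l = wd n e l) := by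
  rw [typeIIa_iff_exists_swap hΓ hΓ', exists_word_swap_iff]
  refine exists_congr fun i => and_congr_right fun hi => exists_congr fun j =>
    and_congr_right fun hj => ?_
  simp only [Set.eqOn_comp_swap_iff (mem_coe.2 hi) (mem_coe.2 hj), mem_coe]
end

section
/- For intertwined perfect matchings Γ on {1,…,2n} and Γ' on {1,…,2m}, one has Γ ⊑ Γ' if and only if p_Γ ≤_i p_{Γ'}, where p_Γ and p_{Γ'} are the permutations associated to Γ and Γ'. -/
/-!
Read a matching as a set of chords with left end `e.inf` and right end `e.sup`, and attach to it
the permutation sending `j` to the rank, among the left ends, of the partner of the `j`-th right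
end counted from the right; for an intertwined matching this is `p_Γ`.

`⇐`: if `σ` is Type-I-below `τ`, Type I(b) moves slide first the right ends and then the left
ends of the chords of `σ` onto those of the corresponding chords of `τ`, and Type I(a) moves add
the remaining chords of `τ`. A Type II move of permutations is a Type II(a) move of matchings.

`⇒`: a Type II(b) move creates two chords one entirely to the left of the other, and no move
destroys such a pair. An intertwined matching has none, so no Type II(b) move occurs below `Γ'`.
Of the other moves, Type I(a) becomes a Type-I-below step, Type I(b) relabels the vertices
monotonically and so keeps the permutation, and Type II(a) becomes a Type II move.
-/

open Finset

namespace Sym2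

variable {α β : Type*} [LinearOrder α] [LinearOrder β]

theorem inf_mk_of_le {a b : α} (h : a ≤ b) : s(a, b).inf = a := by simp [h]

theorem sup_mk_of_le {a b : α} (h : a ≤ b) : s(a, b).sup = b := by simp [h]

theorem mk_inf_sup (e : Sym2 α) : s(e.inf, e.sup) = e := by
  induction e using Sym2.ind with
  | _ a b => rcases le_total a b with h | h <;> simp [h, Sym2.eq_swap]

theorem inf_mem (e : Sym2 α) : e.inf ∈ e := by
  induction e using Sym2.ind with
  | _ a b => rcases le_total a b with h | h <;> simp [h]

theorem sup_mem (e : Sym2 α) : e.sup ∈ e := by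
  induction e using Sym2.ind with
  | _ a b => rcases le_total a b with h | h <;> simp [h]

theorem inf_map {u : α → β} {e : Sym2 α} (hu : MonotoneOn u {v | v ∈ e}) :
    (e.map u).inf = u e.inf := by
  induction e using Sym2.ind with
  | _ a b => simpa using (hu.map_min (by simp) (by simp)).symm

theorem sup_map {u : α → β} {e : Sym2 α} (hu : MonotoneOn u {v | v ∈ e}) :
    (e.map u).sup = u e.sup := by
  induction e using Sym2.ind with
  | _ a b => simpa using (hu.map_max (by simp) (by simp)).symm

end Sym2

theorem Fin.val_le_apply_of_strictMono {n m : ℕ} {f : Fin n → Fin m} (hf : StrictMono f)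
    (j : Fin n) : (j : ℕ) ≤ f j := by
  simpa using card_le_card_of_injOn f (s := Iio j) (t := Iio (f j))
    (fun x hx => by simpa using hf (by simpa using hx)) hf.injective.injOn

theorem Fin.apply_add_le_of_strictMono {n m : ℕ} {f : Fin n → Fin m} (hf : StrictMono f)
    (j : Fin n) : (f j : ℕ) + (n - j) ≤ m := by
  have := card_le_card_of_injOn f (s := Ioi j) (t := Ioi (f j))
    (fun x hx => by simpa using hf (by simpa using hx)) hf.injective.injOn
  simp only [Fin.card_Ioi] at this
  have := j.isLt; have := (f j).isLt
  omega

theorem Finset.exists_strictMono_orderEmbOfFin_eq {α : Type*} [LinearOrder α] {s t : Finset α}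
    (hst : s ⊆ t) {k l : ℕ} (hs : s.card = k) (ht : t.card = l) :
    ∃ g : Fin k → Fin l, StrictMono g ∧ ∀ i, t.orderEmbOfFin ht (g i) = s.orderEmbOfFin hs i := by
  have hg : ∀ i, t.orderEmbOfFin ht ((t.orderIsoOfFin ht).symm
      ⟨s.orderEmbOfFin hs i, hst (orderEmbOfFin_mem s hs i)⟩) = s.orderEmbOfFin hs i := by
    intro i
    rw [← coe_orderIsoOfFin_apply, OrderIso.apply_symm_apply]
  refine ⟨_, fun i i' hii' => ?_, hg⟩
  rw [← (t.orderEmbOfFin ht).lt_iff_lt, hg, hg]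
  exact (s.orderEmbOfFin hs).strictMono hii'

theorem Finset.image_eq_insert_insert_erase_erase_s11 {ι α : Type*} [Fintype ι] [DecidableEq ι]
    [DecidableEq α] {F F' : ι → α} (hF : Function.Injective F) {p q : ι} (hpq : p ≠ q)
    (hFF' : ∀ j, j ≠ p → j ≠ q → F' j = F j) :
    univ.image F' = insert (F' p) (insert (F' q) (((univ.image F).erase (F p)).erase (F q))) := by
  ext e
  simp only [mem_insert, mem_erase, mem_image, mem_univ, true_and]
  constructor
  · rintro ⟨j, rfl⟩
    by_cases hjp : j = p
    · exact .inl (hjp ▸ rfl)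
    by_cases hjq : j = q
    · exact .inr (.inl (hjq ▸ rfl))
    rw [hFF' j hjp hjq]
    exact .inr (.inr ⟨hF.ne hjq, hF.ne hjp, j, rfl⟩)
  · rintro (rfl | rfl | ⟨hq, hp, j, rfl⟩)
    · exact ⟨p, rfl⟩
    · exact ⟨q, rfl⟩
    · exact ⟨j, hFF' j (by rintro rfl; exact hp rfl) (by rintro rfl; exact hq rfl)⟩

namespace IsMatching

variable {Δ : Finset (Sym2 ℕ)}

theorem eq_of_mem_of_mem_s11 (h : IsMatching Δ) {e f : Sym2 ℕ} (he : e ∈ Δ) (hf : f ∈ Δ) {v : ℕ}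
    (hve : v ∈ e) (hvf : v ∈ f) : e = f := by
  by_contra hne
  exact h.2 e he f hf hne v hve hvf

theorem inf_lt_sup (h : IsMatching Δ) {e : Sym2 ℕ} (he : e ∈ Δ) : e.inf < e.sup := by
  refine lt_of_le_of_ne e.inf_le_sup fun hes => h.1 e he ?_
  rw [← Sym2.mk_inf_sup e, hes, Sym2.mk_isDiag_iff]

theorem right_unique (h : IsMatching Δ) {x y y' : ℕ} (hy : s(x, y) ∈ Δ) (hy' : s(x, y') ∈ Δ) :
    y = y' :=
  Sym2.congr_right.mp (h.eq_of_mem_of_mem_s11 hy hy' (Sym2.mem_mk_left _ _) (Sym2.mem_mk_left _ _))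

theorem left_unique (h : IsMatching Δ) {x x' y : ℕ} (hx : s(x, y) ∈ Δ) (hx' : s(x', y) ∈ Δ) :
    x = x' :=
  Sym2.congr_left.mp (h.eq_of_mem_of_mem_s11 hx hx' (Sym2.mem_mk_right _ _) (Sym2.mem_mk_right _ _))

theorem eq_of_subset {A B : Finset (Sym2 ℕ)} (hB : IsMatching B) (hAB : A ⊆ B)
    (hv : ∀ v, InMatch B v → InMatch A v) : A = B := by
  refine hAB.antisymm fun e he => ?_
  obtain ⟨f, hf, hvf⟩ := hv e.inf ⟨e, he, e.inf_mem⟩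
  rwa [← hB.eq_of_mem_of_mem_s11 (hAB hf) he hvf e.inf_mem]

theorem union_sdiff {N O : Finset (Sym2 ℕ)} (h : IsMatching Δ) (hN : IsMatching N)
    (hO : O ⊆ Δ) (hNO : ∀ v, InMatch N v → InMatch O v ∨ ¬ InMatch Δ v) :
    IsMatching (N ∪ (Δ \ O)) := by
  have hcross : ∀ e ∈ N, ∀ f ∈ Δ \ O, ∀ v ∈ e, v ∉ f := by
    intro e he f hf v hve hvf
    rw [mem_sdiff] at hf
    rcases hNO v ⟨e, he, hve⟩ with ⟨g, hg, hvg⟩ | hfree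
    · exact hf.2 (h.eq_of_mem_of_mem_s11 hf.1 (hO hg) hvf hvg ▸ hg)
    · exact hfree ⟨f, hf.1, hvf⟩
  refine ⟨fun e he => ?_, fun e he f hf hef v hve hvf => ?_⟩
  · rcases mem_union.mp he with he | he
    exacts [hN.1 e he, h.1 e (mem_sdiff.mp he).1]
  · rcases mem_union.mp he with he | he <;> rcases mem_union.mp hf with hf | hf
    · exact hN.2 e he f hf hef v hve hvf
    · exact hcross e he f hf v hve hvf
    · exact hcross f hf e he v hvf hve
    · exact h.2 e (mem_sdiff.mp he).1 f (mem_sdiff.mp hf).1 hef v hve hvf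

end IsMatching

theorem isMatching_singleton {x y : ℕ} (hxy : x ≠ y) : IsMatching {s(x, y)} := by
  simp [IsMatching, hxy]

theorem isMatching_pair {x y z w : ℕ} (hxy : x ≠ y) (hzw : z ≠ w) (hxz : x ≠ z) (hxw : x ≠ w)
    (hyz : y ≠ z) (hyw : y ≠ w) : IsMatching {s(x, y), s(z, w)} := by
  refine ⟨?_, ?_⟩ <;> simp <;> omega

theorem MatchStep.isMatching {Δ Δ' : Finset (Sym2 ℕ)} (hs : MatchStep Δ Δ') (h : IsMatching Δ) :
    IsMatching Δ' := by
  rcases hs with ⟨i, j, hij, hi, hj, rfl⟩ | ⟨i, j, hij, hj, rfl⟩ |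
      ⟨a, b, c, d, hab, hbc, hcd, had, hbc', -, rfl⟩ | ⟨a, b, c, d, hab, hbc, hcd, hac, hbd, -, rfl⟩
  · rw [insert_eq, ← sdiff_empty (s := Δ)]
    refine h.union_sdiff (isMatching_singleton hij) (empty_subset _) fun v hv => .inr ?_
    rcases (by simpa [InMatch] using hv : v = i ∨ v = j) with rfl | rfl
    exacts [hi, hj]
  · have hi : i ≠ j + 1 := by rintro rfl; exact hj ⟨_, hij, Sym2.mem_mk_left _ _⟩
    rw [insert_eq, ← sdiff_singleton_eq_erase]
    refine h.union_sdiff (isMatching_singleton hi) (by simpa using hij) fun v hv => ?_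
    rcases (by simpa [InMatch] using hv : v = i ∨ v = j + 1) with rfl | rfl
    exacts [.inl ⟨_, mem_singleton_self _, Sym2.mem_mk_left _ _⟩, .inr hj]
  all_goals
    have hset : ∀ x y u w : Sym2 ℕ,
        insert x (insert y ((Δ.erase u).erase w)) = {x, y} ∪ (Δ \ {u, w}) := by
      intros; ext; simp; tauto
    rw [hset]
    refine h.union_sdiff (isMatching_pair (by omega) (by omega) (by omega) (by omega) (by omega)
      (by omega)) (by simp [insert_subset_iff, *]) fun v hv => ?_
    left
    simp [InMatch] at hv ⊢
    omega

def leftEnds (Δ : Finset (Sym2 ℕ)) : Finset ℕ := Δ.image Sym2.inf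

def rightEnds (Δ : Finset (Sym2 ℕ)) : Finset ℕ := Δ.image Sym2.sup

theorem inMatch_of_mem_leftEnds {Δ : Finset (Sym2 ℕ)} {x : ℕ} (hx : x ∈ leftEnds Δ) :
    InMatch Δ x := by
  obtain ⟨e, he, rfl⟩ := mem_image.mp hx
  exact ⟨e, he, e.inf_mem⟩

theorem inMatch_of_mem_rightEnds {Δ : Finset (Sym2 ℕ)} {y : ℕ} (hy : y ∈ rightEnds Δ) :
    InMatch Δ y := by
  obtain ⟨e, he, rfl⟩ := mem_image.mp hy
  exact ⟨e, he, e.sup_mem⟩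

namespace IsMatching

variable {Δ : Finset (Sym2 ℕ)}

theorem card_leftEnds (h : IsMatching Δ) : (leftEnds Δ).card = Δ.card :=
  card_image_of_injOn fun e he f hf hef =>
    h.eq_of_mem_of_mem_s11 he hf e.inf_mem (hef ▸ f.inf_mem)

theorem card_rightEnds (h : IsMatching Δ) : (rightEnds Δ).card = Δ.card :=
  card_image_of_injOn fun e he f hf hef =>
    h.eq_of_mem_of_mem_s11 he hf e.sup_mem (hef ▸ f.sup_mem)

theorem ne_of_mem_leftEnds_of_mem_rightEnds (h : IsMatching Δ) {x y : ℕ} (hx : x ∈ leftEnds Δ)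
    (hy : y ∈ rightEnds Δ) : x ≠ y := by
  obtain ⟨e, he, rfl⟩ := mem_image.mp hx
  obtain ⟨f, hf, rfl⟩ := mem_image.mp hy
  intro hef
  have := h.eq_of_mem_of_mem_s11 he hf e.inf_mem (hef ▸ f.sup_mem)
  subst this
  exact (h.inf_lt_sup he).ne hef

variable (h : IsMatching Δ) {k : ℕ} (hk : Δ.card = k)

def leftEmb : Fin k ↪o ℕ := (leftEnds Δ).orderEmbOfFin (h.card_leftEnds.trans hk)

def rightEmb : Fin k ↪o ℕ := (rightEnds Δ).orderEmbOfFin (h.card_rightEnds.trans hk)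

theorem leftEmb_mem (i : Fin k) : h.leftEmb hk i ∈ leftEnds Δ := orderEmbOfFin_mem _ _ _

theorem rightEmb_mem (j : Fin k) : h.rightEmb hk j ∈ rightEnds Δ := orderEmbOfFin_mem _ _ _

theorem exists_leftEmb_eq {x : ℕ} (hx : x ∈ leftEnds Δ) : ∃ i, h.leftEmb hk i = x := by
  rwa [← Set.mem_range, leftEmb, range_orderEmbOfFin]

theorem exists_rightEmb_eq {y : ℕ} (hy : y ∈ rightEnds Δ) : ∃ j, h.rightEmb hk j = y := by
  rwa [← Set.mem_range, rightEmb, range_orderEmbOfFin]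

theorem mk_leftEmb_rightEmb_inj {i i' j j' : Fin k} :
    s(h.leftEmb hk i, h.rightEmb hk j) = s(h.leftEmb hk i', h.rightEmb hk j') ↔
      i = i' ∧ j = j' := by
  refine ⟨fun hij => ?_, by rintro ⟨rfl, rfl⟩; rfl⟩
  rcases Sym2.eq_iff.mp hij with ⟨hi, hj⟩ | ⟨hi, -⟩
  · exact ⟨(h.leftEmb hk).injective hi, (h.rightEmb hk).injective hj⟩
  · exact absurd hi (h.ne_of_mem_leftEnds_of_mem_rightEnds (h.leftEmb_mem hk i)
      (h.rightEmb_mem hk j'))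

theorem exists_mk_leftEmb_mem (j : Fin k) : ∃ i, s(h.leftEmb hk i, h.rightEmb hk j) ∈ Δ := by
  obtain ⟨e, he, hej⟩ := mem_image.mp (h.rightEmb_mem hk j)
  obtain ⟨i, hi⟩ := h.exists_leftEmb_eq hk (mem_image_of_mem _ he)
  exact ⟨i, by rwa [hi, ← hej, Sym2.mk_inf_sup]⟩

/-- Positions count right ends from the right, as `p_Γ(i) = e_{n+1-i}` does. -/
noncomputable def perm : Equiv.Perm (Fin k) :=
  Equiv.ofBijective (fun j => (h.exists_mk_leftEmb_mem hk j.rev).choose) <|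
    Finite.injective_iff_bijective.mp fun j j' hjj' => by
      have hj := (h.exists_mk_leftEmb_mem hk j.rev).choose_spec
      have hj' := (h.exists_mk_leftEmb_mem hk j'.rev).choose_spec
      rw [hjj'] at hj
      simpa using (h.rightEmb hk).injective (h.right_unique hj hj')

theorem perm_eq_iff {i j : Fin k} :
    h.perm hk j = i ↔ s(h.leftEmb hk i, h.rightEmb hk j.rev) ∈ Δ := by
  have hj : s(h.leftEmb hk (h.perm hk j), h.rightEmb hk j.rev) ∈ Δ :=
    (h.exists_mk_leftEmb_mem hk j.rev).choose_spec
  refine ⟨fun hji => hji ▸ hj, fun hi => (h.leftEmb hk).injective (h.left_unique hj hi)⟩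

theorem mk_perm_mem (j : Fin k) : s(h.leftEmb hk (h.perm hk j), h.rightEmb hk j.rev) ∈ Δ :=
  (h.perm_eq_iff hk).mp rfl

theorem exists_perm_rev_eq {x y : ℕ} (hxy : s(x, y) ∈ Δ) (hlt : x < y) :
    ∃ i j, h.leftEmb hk i = x ∧ h.rightEmb hk j = y ∧ h.perm hk j.rev = i := by
  obtain ⟨i, hi⟩ := h.exists_leftEmb_eq hk (mem_image_of_mem Sym2.inf hxy)
  obtain ⟨j, hj⟩ := h.exists_rightEmb_eq hk (mem_image_of_mem Sym2.sup hxy)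
  rw [Sym2.inf_mk_of_le hlt.le] at hi
  rw [Sym2.sup_mk_of_le hlt.le] at hj
  exact ⟨i, j, hi, hj, (h.perm_eq_iff hk).mpr (by rwa [Fin.rev_rev, hi, hj])⟩

end IsMatching

noncomputable def IsMatching.sigmaPerm {Δ : Finset (Sym2 ℕ)} (h : IsMatching Δ) :
    Σ n, Equiv.Perm (Fin n) :=
  ⟨Δ.card, h.perm rfl⟩

theorem IsMatching.sigmaPerm_eq {Δ : Finset (Sym2 ℕ)} (h : IsMatching Δ) {k : ℕ}
    (hk : Δ.card = k) : h.sigmaPerm = ⟨k, h.perm hk⟩ := by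
  subst hk
  rfl

theorem IsMatching.leftEmb_eq_of_leftEnds_eq {Δ Δ' : Finset (Sym2 ℕ)} (h : IsMatching Δ)
    (h' : IsMatching Δ') (hL : leftEnds Δ' = leftEnds Δ) {k : ℕ} (hk : Δ.card = k)
    (hk' : Δ'.card = k) (i : Fin k) : h'.leftEmb hk' i = h.leftEmb hk i :=
  congrFun (orderEmbOfFin_unique _ (fun i => hL ▸ h.leftEmb_mem hk i)
    (h.leftEmb hk).strictMono).symm i

theorem IsMatching.rightEmb_eq_of_rightEnds_eq {Δ Δ' : Finset (Sym2 ℕ)} (h : IsMatching Δ)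
    (h' : IsMatching Δ') (hR : rightEnds Δ' = rightEnds Δ) {k : ℕ} (hk : Δ.card = k)
    (hk' : Δ'.card = k) (j : Fin k) : h'.rightEmb hk' j = h.rightEmb hk j :=
  congrFun (orderEmbOfFin_unique _ (fun j => hR ▸ h.rightEmb_mem hk j)
    (h.rightEmb hk).strictMono).symm j

theorem IsMatching.typeIBelow_perm_of_subset {Δ Δ' : Finset (Sym2 ℕ)} (h : IsMatching Δ)
    (h' : IsMatching Δ') {k k' : ℕ} (hk : Δ.card = k) (hk' : Δ'.card = k') (hsub : Δ ⊆ Δ') :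
    TypeIBelow (h.perm hk) (h'.perm hk') := by
  obtain ⟨gL, hgL, hL⟩ := exists_strictMono_orderEmbOfFin_eq (image_subset_image hsub)
    (h.card_leftEnds.trans hk) (h'.card_leftEnds.trans hk')
  obtain ⟨gR, hgR, hR⟩ := exists_strictMono_orderEmbOfFin_eq (image_subset_image hsub)
    (h.card_rightEnds.trans hk) (h'.card_rightEnds.trans hk')
  have hτ : ∀ t, h'.perm hk' (gR t.rev).rev = gL (h.perm hk t) := fun t => by
    rw [h'.perm_eq_iff, Fin.rev_rev]
    exact hsub (by convert h.mk_perm_mem hk t using 2 <;> [exact hL _; exact hR _])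
  refine ⟨fun t => (gR t.rev).rev, fun t t' htt' => ?_, fun t => ?_, fun t t' => ?_⟩
  · exact Fin.rev_lt_rev.mpr (hgR (Fin.rev_lt_rev.mpr htt'))
  · rw [hτ]
    exact Fin.val_le_apply_of_strictMono hgL _
  · rw [hτ, hτ, hgL.lt_iff_lt]

theorem IsMatching.perm_image_map {Δ : Finset (Sym2 ℕ)} (h : IsMatching Δ) {u : ℕ → ℕ}
    (hu : StrictMonoOn u {v | InMatch Δ v}) (h' : IsMatching (Δ.image (Sym2.map u))) {k : ℕ}
    (hk : Δ.card = k) (hk' : (Δ.image (Sym2.map u)).card = k) : h'.perm hk' = h.perm hk := by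
  have hmono : ∀ e ∈ Δ, MonotoneOn u {v | v ∈ e} := fun e he =>
    (hu.mono fun v hv => ⟨e, he, hv⟩).monotoneOn
  have hL : ∀ i, h'.leftEmb hk' i = u (h.leftEmb hk i) := by
    refine congrFun (orderEmbOfFin_unique _ (fun i => ?_) fun i i' hii' => ?_).symm
    · obtain ⟨e, he, hei⟩ := mem_image.mp (h.leftEmb_mem hk i)
      exact mem_image.mpr ⟨_, mem_image_of_mem _ he, by rw [Sym2.inf_map (hmono e he), hei]⟩
    · exact hu (inMatch_of_mem_leftEnds (h.leftEmb_mem hk i))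
        (inMatch_of_mem_leftEnds (h.leftEmb_mem hk i')) ((h.leftEmb hk).strictMono hii')
  have hR : ∀ j, h'.rightEmb hk' j = u (h.rightEmb hk j) := by
    refine congrFun (orderEmbOfFin_unique _ (fun j => ?_) fun j j' hjj' => ?_).symm
    · obtain ⟨e, he, hej⟩ := mem_image.mp (h.rightEmb_mem hk j)
      exact mem_image.mpr ⟨_, mem_image_of_mem _ he, by rw [Sym2.sup_map (hmono e he), hej]⟩
    · exact hu (inMatch_of_mem_rightEnds (h.rightEmb_mem hk j))
        (inMatch_of_mem_rightEnds (h.rightEmb_mem hk j')) ((h.rightEmb hk).strictMono hjj')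
  refine Equiv.ext fun j => (h'.perm_eq_iff hk').mpr ?_
  rw [hL, hR]
  exact mem_image_of_mem _ (h.mk_perm_mem hk j)

section Chords

variable {N : ℕ} {o g : Fin N → ℕ}

def chords (o g : Fin N → ℕ) : Finset (Sym2 ℕ) := univ.image fun j => s(o j, g j)

theorem mem_chords {e : Sym2 ℕ} : e ∈ chords o g ↔ ∃ j, s(o j, g j) = e := by simp [chords]

theorem inMatch_chords {v : ℕ} : InMatch (chords o g) v ↔ ∃ j, v = o j ∨ v = g j := by
  simp [InMatch, chords]

theorem chords_comm : chords o g = chords g o := by simp [chords, Sym2.eq_swap]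

end Chords

/-- The intertwined matching `Γ` with `p_Γ = σ` (values shifted down by one). -/
def permMatching (k : ℕ) (σ : Equiv.Perm (Fin k)) : Finset (Sym2 ℕ) :=
  chords (fun j => (σ j : ℕ) + 1) (fun j => 2 * k - j)

section PermMatching

variable {k : ℕ} (σ : Equiv.Perm (Fin k))

theorem injective_permMatching_edge :
    Function.Injective fun j : Fin k => s((σ j : ℕ) + 1, 2 * k - j) := by
  intro j j' hjj'
  have := j.isLt; have := j'.isLt; have := (σ j).isLt; have := (σ j').isLt
  rcases Sym2.eq_iff.mp hjj' with ⟨-, h⟩ | ⟨h, -⟩ <;> exact Fin.ext (by omega)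

theorem card_permMatching : (permMatching k σ).card = k := by
  rw [permMatching, chords, card_image_of_injective _ (injective_permMatching_edge σ), card_univ,
    Fintype.card_fin]

theorem isMatching_permMatching : IsMatching (permMatching k σ) := by
  refine ⟨fun e he => ?_, fun e he f hf hef v hve hvf => ?_⟩
  · obtain ⟨j, rfl⟩ := mem_chords.mp he
    have := (σ j).isLt
    rw [Sym2.mk_isDiag_iff]
    omega
  · obtain ⟨j, rfl⟩ := mem_chords.mp he
    obtain ⟨j', rfl⟩ := mem_chords.mp hf
    have hjj' : j ≠ j' := by rintro rfl; exact hef rfl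
    have hσ : (σ j : ℕ) ≠ σ j' := fun h => hjj' (σ.injective (Fin.ext h))
    have := Fin.val_ne_of_ne hjj'
    have := (σ j).isLt; have := (σ j').isLt; have := j.isLt; have := j'.isLt
    simp only [Sym2.mem_iff] at hve hvf
    omega

theorem inMatch_permMatching {v : ℕ} : InMatch (permMatching k σ) v ↔ 1 ≤ v ∧ v ≤ 2 * k := by
  rw [permMatching, inMatch_chords]
  constructor
  · rintro ⟨j, rfl | rfl⟩ <;> have := (σ j).isLt <;> have := j.isLt <;> omega
  · rintro ⟨hv1, hv2⟩
    by_cases hvk : v ≤ k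
    · exact ⟨σ.symm ⟨v - 1, by omega⟩, .inl (by simp; omega)⟩
    · exact ⟨⟨2 * k - v, by omega⟩, .inr (by simp; omega)⟩

theorem perm_permMatching (h : IsMatching (permMatching k σ)) (hk : (permMatching k σ).card = k) :
    h.perm hk = σ := by
  have hL : ∀ i, h.leftEmb hk i = (i : ℕ) + 1 := by
    refine congrFun (orderEmbOfFin_unique _ (fun i => ?_) fun i i' hii' => by simpa using hii').symm
    refine mem_image.mpr ⟨_, mem_chords.mpr ⟨σ.symm i, rfl⟩, ?_⟩
    have := (σ.symm i).isLt
    simp only [Equiv.apply_symm_apply]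
    rw [Sym2.inf_mk_of_le (by omega)]
  have hR : ∀ j, h.rightEmb hk j = k + 1 + j := by
    refine congrFun (orderEmbOfFin_unique _ (fun j => ?_) fun j j' hjj' => by simpa using hjj').symm
    refine mem_image.mpr ⟨_, mem_chords.mpr ⟨Fin.rev j, rfl⟩, ?_⟩
    simp only [Fin.val_rev]
    have := j.isLt
    rw [Sym2.sup_mk_of_le (by omega)]
    omega
  refine Equiv.ext fun j => (h.perm_eq_iff hk).mpr ?_
  rw [hR, hL, Fin.val_rev]
  exact mem_chords.mpr ⟨j, by have := j.isLt; congr 2; omega⟩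

end PermMatching

theorem IsIntertwined.eq_permMatching {n : ℕ} {Γ : Finset (Sym2 ℕ)} {e : ℕ → ℕ}
    (hΓ : IsIntertwined n Γ e) {π : Equiv.Perm (Fin n)}
    (hπ : ∀ i : Fin n, (π i : ℕ) + 1 = e (n - (i : ℕ))) : Γ = permMatching n π := by
  symm
  refine hΓ.1.eq_of_subset (fun f hf => ?_) fun v hv => ?_
  · obtain ⟨j, rfl⟩ := mem_chords.mp hf
    have := j.isLt
    have h2n : 2 * n - j = n + (n - j) := by omega
    rw [h2n, hπ]
    exact (hΓ.2.2 (n - j) (by omega) (by omega)).2.2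
  · exact (inMatch_permMatching π).mpr ((hΓ.2.1 v).mp hv)

theorem matchStep_insert {A B : Finset (Sym2 ℕ)} (hB : IsMatching B) (hAB : A ⊆ B)
    {e : Sym2 ℕ} (heB : e ∈ B) (heA : e ∉ A) : MatchStep A (insert e A) := by
  have hfree : ∀ v ∈ e, ¬ InMatch A v := fun v hv ⟨f, hf, hvf⟩ =>
    heA (hB.eq_of_mem_of_mem_s11 (hAB hf) heB hvf hv ▸ hf)
  refine .inl ⟨e.inf, e.sup, (hB.inf_lt_sup heB).ne, hfree _ e.inf_mem, hfree _ e.sup_mem, ?_⟩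
  rw [Sym2.mk_inf_sup]

theorem matchLe_of_subset {A B : Finset (Sym2 ℕ)} (hB : IsMatching B) (hAB : A ⊆ B) :
    MatchLe A B := by
  suffices ∀ C ⊆ B, MatchLe A (A ∪ C) by simpa [union_eq_right.mpr hAB] using this B subset_rfl
  intro C
  induction C using Finset.induction_on with
  | empty =>
    intro _
    rw [union_empty]
    exact .refl
  | insert e C _ ih =>
    intro hC
    rw [union_insert]
    by_cases he : e ∈ A ∪ C
    · rw [insert_eq_of_mem he]
      exact ih ((subset_insert e C).trans hC)
    · exact (ih ((subset_insert e C).trans hC)).tail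
        (matchStep_insert hB (union_subset hAB ((subset_insert e C).trans hC))
          (hC (mem_insert_self e C)) he)

section Slide

variable {N : ℕ} {o g h : Fin N → ℕ}

theorem matchStep_chords_update (ho : Function.Injective o) (j₀ : Fin N)
    (hog : ∀ j, o j ≠ g j₀) (hfree : ¬ InMatch (chords o g) (g j₀ + 1)) :
    MatchStep (chords o g) (chords o (Function.update g j₀ (g j₀ + 1))) := by
  refine .inr (.inl ⟨o j₀, g j₀, mem_chords.mpr ⟨j₀, rfl⟩, hfree, ?_⟩)
  ext e
  simp only [mem_insert, mem_erase, mem_chords]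
  constructor
  · rintro ⟨j, rfl⟩
    by_cases hj : j = j₀
    · subst hj
      simp
    · refine .inr ⟨fun hj' => ?_, j, by simp [hj]⟩
      rcases Sym2.eq_iff.mp hj' with ⟨hoj, -⟩ | ⟨hoj, -⟩
      exacts [hj (ho hoj), hog j hoj]
  · rintro (rfl | ⟨hne, j, rfl⟩)
    · exact ⟨j₀, by simp⟩
    · have hj : j ≠ j₀ := by rintro rfl; exact hne rfl
      exact ⟨j, by simp [hj]⟩

theorem update_succ_lt_update_succ_iff {ι : Type*} [DecidableEq ι] {g : ι → ℕ}
    (hg : Function.Injective g) {j₀ : ι} (hfree : ∀ j, g j ≠ g j₀ + 1) (j j' : ι) :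
    Function.update g j₀ (g j₀ + 1) j < Function.update g j₀ (g j₀ + 1) j' ↔ g j < g j' := by
  by_cases hj : j = j₀ <;> by_cases hj' : j' = j₀
  · subst hj hj'
    simp only [lt_irrefl]
  · subst hj
    simp only [Function.update_self, Function.update_of_ne hj']
    have := hfree j'
    omega
  · subst hj'
    simp only [Function.update_self, Function.update_of_ne hj]
    have := hg.ne hj
    omega
  · simp only [Function.update_of_ne hj, Function.update_of_ne hj']

theorem sum_sub_update_succ {ι : Type*} [Fintype ι] [DecidableEq ι] {g h : ι → ℕ} {j₀ : ι}
    (hj₀ : g j₀ < h j₀) : ∑ j, (h j - Function.update g j₀ (g j₀ + 1) j) + 1 = ∑ j, (h j - g j) := by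
  have hterm : ∀ j, h j - Function.update g j₀ (g j₀ + 1) j + (if j = j₀ then 1 else 0) =
      h j - g j := by
    intro j
    by_cases hj : j = j₀
    · subst hj
      simp only [Function.update_self, if_true]
      omega
    · simp [hj]
  rw [← sum_congr rfl fun j _ => hterm j, sum_add_distrib, sum_ite_eq']
  simp

/-- The unfinished chord with the largest target can move up by one vertex. -/
theorem exists_lt_forall_ne_succ (hle : ∀ j, g j ≤ h j) (hiso : ∀ j j', g j < g j' ↔ h j < h j')
    (hd : ∑ j, (h j - g j) ≠ 0) : ∃ j₀, g j₀ < h j₀ ∧ ∀ j, g j ≠ g j₀ + 1 := by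
  have hS : (univ.filter fun j => g j < h j).Nonempty := by
    by_contra hS
    rw [not_nonempty_iff_eq_empty, filter_eq_empty_iff] at hS
    exact hd (sum_eq_zero fun j _ => Nat.sub_eq_zero_of_le (not_lt.mp (hS (mem_univ j))))
  obtain ⟨j₀, hj₀, hmax⟩ := exists_max_image _ h hS
  have hj₀ := (mem_filter.mp hj₀).2
  refine ⟨j₀, hj₀, fun j hj => ?_⟩
  have := (hiso j₀ j).mp (by omega)
  by_cases hjh : g j < h j
  · exact absurd (hmax j (mem_filter.mpr ⟨mem_univ j, hjh⟩)) (by omega)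
  · have := hle j
    omega

theorem matchLe_chords_of_le (ho : Function.Injective o) (hh : Function.Injective h)
    (hle : ∀ j, g j ≤ h j) (hiso : ∀ j j', g j < g j' ↔ h j < h j')
    (hfix : ∀ j j', o j' < g j ∨ h j < o j') : MatchLe (chords o g) (chords o h) := by
  induction hd : ∑ j, (h j - g j) generalizing g with
  | zero =>
    have : g = h := funext fun j => le_antisymm (hle j) <| by
      have := (sum_eq_zero_iff.mp hd) j (mem_univ j)
      omega
    rw [this]
    exact .refl
  | succ d ih =>
    have hg : Function.Injective g := fun j j' hjj' => hh <| le_antisymm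
      (not_lt.mp fun hlt => ((hiso j' j).mpr hlt).ne' hjj')
      (not_lt.mp fun hlt => ((hiso j j').mpr hlt).ne' hjj'.symm)
    obtain ⟨j₀, hj₀, hne⟩ := exists_lt_forall_ne_succ hle hiso (by omega)
    have hfree : ¬ InMatch (chords o g) (g j₀ + 1) := by
      rw [inMatch_chords]
      rintro ⟨j, hj | hj⟩
      · have := hfix j₀ j
        omega
      · exact hne j hj.symm
    refine .head (matchStep_chords_update ho j₀ (fun j hj => ?_) hfree) (ih ?_ ?_ ?_ ?_)
    · have := hfix j₀ j
      omega
    · intro j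
      by_cases hj : j = j₀
      · subst hj; simp; omega
      · simp [hj, hle j]
    · intro j j'
      rw [update_succ_lt_update_succ_iff hg hne, hiso]
    · intro j j'
      have := hfix j j'
      by_cases hj : j = j₀
      · subst hj; simp; omega
      · simp [hj]; omega
    · have := sum_sub_update_succ (h := h) hj₀
      omega

end Slide

theorem TypeIBelow.matchLe_permMatching {n m : ℕ} {σ : Equiv.Perm (Fin n)}
    {τ : Equiv.Perm (Fin m)} (hστ : TypeIBelow σ τ) :
    MatchLe (permMatching n σ) (permMatching m τ) := by
  obtain ⟨f, hf, hdom, hiso⟩ := hστ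
  have hb : ∀ j, (σ j : ℕ) < n ∧ (τ (f j) : ℕ) < m ∧ (j : ℕ) ≤ f j ∧ (f j : ℕ) + (n - j) ≤ m :=
    fun j => ⟨(σ j).isLt, (τ (f j)).isLt, Fin.val_le_apply_of_strictMono hf j,
      Fin.apply_add_le_of_strictMono hf j⟩
  have hσ : Function.Injective fun j => (σ j : ℕ) + 1 := fun j j' hjj' =>
    σ.injective (Fin.ext (by simpa using hjj'))
  have hright : MatchLe (permMatching n σ)
      (chords (fun j => (σ j : ℕ) + 1) fun j => 2 * m - f j) := by
    refine matchLe_chords_of_le hσ (fun j j' hjj' => ?_) (fun j => ?_) (fun j j' => ?_)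
      (fun j j' => ?_)
    · have := hb j; have := hb j'
      exact hf.injective (Fin.ext (by omega))
    · have := hb j
      omega
    · have := hb j; have := hb j'
      have := hf.lt_iff_lt (a := j') (b := j)
      simp only [Fin.lt_def] at this
      omega
    · have := hb j; have := hb j'
      omega
  have hleft : MatchLe (chords (fun j => 2 * m - (f j : ℕ)) fun j => (σ j : ℕ) + 1)
      (chords (fun j => 2 * m - (f j : ℕ)) fun j => (τ (f j) : ℕ) + 1) := by
    refine matchLe_chords_of_le (fun j j' hjj' => ?_) (fun j j' hjj' => ?_) (fun j => ?_)
      (fun j j' => ?_) (fun j j' => ?_)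
    · have := hb j; have := hb j'
      exact hf.injective (Fin.ext (by omega))
    · exact hf.injective (τ.injective (Fin.ext (by simpa using hjj')))
    · have := hdom j
      omega
    · simpa only [add_lt_add_iff_right, Fin.lt_def] using hiso j j'
    · have := hb j; have := hb j'
      omega
  have hgrow : MatchLe (chords (fun j => 2 * m - (f j : ℕ)) fun j => (τ (f j) : ℕ) + 1)
      (permMatching m τ) := by
    refine matchLe_of_subset (isMatching_permMatching τ) fun e he => ?_
    obtain ⟨j, rfl⟩ := mem_chords.mp he
    exact mem_chords.mpr ⟨f j, Sym2.eq_swap⟩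
  rw [chords_comm] at hleft
  exact hright.trans (hleft.trans hgrow)

theorem PermTypeII.matchStep_permMatching {k : ℕ} {σ τ : Equiv.Perm (Fin k)}
    (hστ : PermTypeII σ τ) : MatchStep (permMatching k σ) (permMatching k τ) := by
  obtain ⟨p, q, hpq, hσpq, hbetween, rfl⟩ := hστ
  have hp := (σ p).isLt; have hq := (σ q).isLt; have := q.isLt
  have hpq' : (p : ℕ) < q := hpq
  have hσpq' : (σ p : ℕ) < σ q := hσpq
  refine .inr (.inr (.inl ⟨σ p + 1, σ q + 1, 2 * k - q, 2 * k - p, by omega, by omega, by omega,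
    mem_chords.mpr ⟨p, rfl⟩, mem_chords.mpr ⟨q, rfl⟩, fun v w hv hv' hvw => ?_, ?_⟩))
  · obtain ⟨j, hj⟩ := mem_chords.mp hvw
    have := (σ j).isLt; have := j.isLt
    rcases Sym2.eq_iff.mp hj with ⟨rfl, rfl⟩ | ⟨-, rfl⟩
    · have hjq : j < q := by
        simpa using hbetween (σ j) (Fin.lt_def.mpr (by omega)) (Fin.lt_def.mpr (by omega))
      rw [Fin.lt_def] at hjq
      omega
    · omega
  · rw [permMatching, chords, image_eq_insert_insert_erase_erase_s11 (injective_permMatching_edge σ)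
      hpq.ne fun j hjp hjq => by simp [Equiv.swap_apply_of_ne_of_ne hjp hjq], insert_comm]
    simp only [Equiv.Perm.mul_apply, Equiv.swap_apply_left, Equiv.swap_apply_right]
    rfl

theorem PermStep.matchLe_permMatching {x y : Σ n, Equiv.Perm (Fin n)} (hxy : PermStep x y) :
    MatchLe (permMatching x.1 x.2) (permMatching y.1 y.2) := by
  rcases hxy with hI | ⟨hxy, hII⟩
  · exact hI.matchLe_permMatching
  · obtain ⟨k, σ⟩ := x
    obtain ⟨k', τ⟩ := y
    obtain rfl : k = k' := hxy
    exact .single (PermTypeII.matchStep_permMatching hII)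

theorem PermLeI.matchLe_permMatching {x y : Σ n, Equiv.Perm (Fin n)} (hxy : PermLeI x y) :
    MatchLe (permMatching x.1 x.2) (permMatching y.1 y.2) := by
  induction hxy with
  | refl => exact .refl
  | tail _ hyz ih => exact ih.trans hyz.matchLe_permMatching

def HasAlignedPair (Δ : Finset (Sym2 ℕ)) : Prop := ∃ e ∈ Δ, ∃ f ∈ Δ, e.sup < f.inf

theorem not_hasAlignedPair_permMatching {k : ℕ} (σ : Equiv.Perm (Fin k)) :
    ¬ HasAlignedPair (permMatching k σ) := by
  rintro ⟨e, he, f, hf, hef⟩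
  obtain ⟨j, rfl⟩ := mem_chords.mp he
  obtain ⟨j', rfl⟩ := mem_chords.mp hf
  have := (σ j).isLt; have := (σ j').isLt; have := j.isLt; have := j'.isLt
  simp only [Sym2.sup_mk, Sym2.inf_mk] at hef
  omega

theorem TypeIIb.hasAlignedPair {Δ Δ' : Finset (Sym2 ℕ)} (hs : TypeIIb Δ Δ') :
    HasAlignedPair Δ' := by
  obtain ⟨a, b, c, d, hab, hbc, hcd, -, -, -, rfl⟩ := hs
  exact ⟨s(a, b), by simp, s(c, d), by simp, by simp; omega⟩

theorem HasAlignedPair.of_typeIb {Δ Δ' : Finset (Sym2 ℕ)} (hs : TypeIb Δ Δ')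
    (hΔ : HasAlignedPair Δ) : HasAlignedPair Δ' := by
  obtain ⟨e, he, f, hf, hef⟩ := hΔ
  obtain ⟨i, j, -, hj, rfl⟩ := hs
  have hmem : ∀ g ∈ Δ, g ≠ s(i, j) → g ∈ insert s(i, j + 1) (Δ.erase s(i, j)) :=
    fun g hg hne => mem_insert_of_mem (mem_erase.mpr ⟨hne, hg⟩)
  by_cases heu : e = s(i, j)
  · have hfj : f.inf ≠ j + 1 := fun hfj => hj ⟨f, hf, hfj ▸ f.inf_mem⟩
    have hfu : f ≠ s(i, j) := by rintro rfl; exact (hef.trans_le (heu ▸ e.inf_le_sup)).false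
    subst heu
    refine ⟨_, mem_insert_self _ _, f, hmem f hf hfu, ?_⟩
    simp only [Sym2.sup_mk] at hef ⊢
    omega
  by_cases hfu : f = s(i, j)
  · subst hfu
    refine ⟨e, hmem e he heu, _, mem_insert_self _ _, ?_⟩
    simp only [Sym2.inf_mk] at hef ⊢
    omega
  exact ⟨e, hmem e he heu, f, hmem f hf hfu, hef⟩

theorem HasAlignedPair.of_typeIIa {Δ Δ' : Finset (Sym2 ℕ)} (hs : TypeIIa Δ Δ')
    (hΔ : HasAlignedPair Δ) : HasAlignedPair Δ' := by
  obtain ⟨e, he, f, hf, hef⟩ := hΔ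
  obtain ⟨a, b, c, d, hab, hbc, hcd, -, -, -, rfl⟩ := hs
  have hmem : ∀ g ∈ Δ, g ≠ s(a, d) → g ≠ s(b, c) →
      g ∈ insert s(a, c) (insert s(b, d) ((Δ.erase s(a, d)).erase s(b, c))) := by
    intro g hg h1 h2
    simp [hg, h1, h2]
  by_cases hf' : f = s(a, d) ∨ f = s(b, c)
  · have hfb : f.inf ≤ b := by rcases hf' with rfl | rfl <;> simp only [Sym2.inf_mk] <;> omega
    have he1 : e ≠ s(a, d) := by rintro rfl; simp only [Sym2.sup_mk] at hef; omega
    have he2 : e ≠ s(b, c) := by rintro rfl; simp only [Sym2.sup_mk] at hef; omega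
    rcases hf' with rfl | rfl
    · exact ⟨e, hmem e he he1 he2, s(a, c), by simp, by simp at hef ⊢; omega⟩
    · exact ⟨e, hmem e he he1 he2, s(b, d), by simp, by simp at hef ⊢; omega⟩
  push Not at hf'
  by_cases he' : e = s(a, d) ∨ e = s(b, c)
  · refine ⟨s(a, c), by simp, f, hmem f hf hf'.1 hf'.2, ?_⟩
    rcases he' with rfl | rfl <;> simp at hef ⊢ <;> omega
  push Not at he'
  exact ⟨e, hmem e he he'.1 he'.2, f, hmem f hf hf'.1 hf'.2, hef⟩

theorem MatchStep.hasAlignedPair {Δ Δ' : Finset (Sym2 ℕ)} (hs : MatchStep Δ Δ')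
    (hΔ : HasAlignedPair Δ) : HasAlignedPair Δ' := by
  rcases hs with ⟨i, j, -, -, -, rfl⟩ | hIb | hIIa | hIIb
  · obtain ⟨e, he, f, hf, hef⟩ := hΔ
    exact ⟨e, mem_insert_of_mem he, f, mem_insert_of_mem hf, hef⟩
  exacts [hΔ.of_typeIb hIb, hΔ.of_typeIIa hIIa, hIIb.hasAlignedPair]

theorem MatchLe.hasAlignedPair {Δ Δ' : Finset (Sym2 ℕ)} (hle : MatchLe Δ Δ')
    (hΔ : HasAlignedPair Δ) : HasAlignedPair Δ' := by
  induction hle with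
  | refl => exact hΔ
  | tail _ hs ih => exact hs.hasAlignedPair ih

/-- A Type I(b) move relabels the vertex `j` as `j + 1`. -/
theorem TypeIb.exists_eq_image_map {Δ Δ' : Finset (Sym2 ℕ)} (hs : TypeIb Δ Δ')
    (h : IsMatching Δ) : ∃ u : ℕ → ℕ, StrictMonoOn u {v | InMatch Δ v} ∧
      Δ' = Δ.image (Sym2.map u) ∧ Δ'.card = Δ.card := by
  obtain ⟨i, j, hij, hj, rfl⟩ := hs
  have hi : i ≠ j := fun hi => h.1 _ hij (Sym2.mk_isDiag_iff.mpr hi)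
  have hfree : ∀ v, InMatch Δ v → v ≠ j + 1 := by rintro v hv rfl; exact hj hv
  set u : ℕ → ℕ := fun x => if x = j then j + 1 else x
  have hij' : s(i, j).map u = s(i, j + 1) := by simp [u, hi]
  have hid : ∀ g ∈ Δ, g ≠ s(i, j) → g.map u = g := by
    intro g hg hne
    refine (Sym2.map_congr fun x hx => if_neg ?_).trans (congrFun Sym2.map_id' g)
    rintro rfl
    exact hne (h.eq_of_mem_of_mem_s11 hg hij hx (Sym2.mem_mk_right _ _))
  refine ⟨u, fun x hx y hy hxy => ?_, ?_, ?_⟩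
  · have := hfree x hx; have := hfree y hy
    simp only [u]
    split_ifs <;> omega
  · ext e
    simp only [mem_insert, mem_erase, mem_image]
    constructor
    · rintro (rfl | ⟨hne, he⟩)
      exacts [⟨_, hij, hij'⟩, ⟨e, he, hid e he hne⟩]
    · rintro ⟨g, hg, rfl⟩
      by_cases hne : g = s(i, j)
      · exact .inl (hne ▸ hij')
      · exact .inr ⟨(hid g hg hne).symm ▸ hne, (hid g hg hne).symm ▸ hg⟩
  · rw [card_insert_of_notMem fun hmem => hj ⟨_, mem_of_mem_erase hmem, Sym2.mem_mk_right _ _⟩,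
      card_erase_of_mem hij, Nat.sub_add_cancel (card_pos.mpr ⟨_, hij⟩)]

theorem TypeIIa.leftEnds_eq_and_rightEnds_eq {Δ Δ' : Finset (Sym2 ℕ)} (hs : TypeIIa Δ Δ') :
    leftEnds Δ' = leftEnds Δ ∧ rightEnds Δ' = rightEnds Δ := by
  obtain ⟨a, b, c, d, hab, hbc, hcd, had, hbc', -, rfl⟩ := hs
  have hne : s(b, c) ≠ s(a, d) := by simp; omega
  have hΔ : insert s(a, d) (insert s(b, c) ((Δ.erase s(a, d)).erase s(b, c))) = Δ := by
    rw [insert_erase (mem_erase.mpr ⟨hne, hbc'⟩), insert_erase had]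
  generalize (Δ.erase s(a, d)).erase s(b, c) = R at hΔ ⊢
  subst hΔ
  simp only [leftEnds, rightEnds, image_insert, Sym2.inf_mk_of_le, Sym2.sup_mk_of_le, hbc.le,
    (hab.trans hbc).le, (hbc.trans hcd).le, (hab.trans (hbc.trans hcd)).le]
  exact ⟨trivial, insert_comm _ _ _⟩

theorem TypeIIa.permTypeII {Δ Δ' : Finset (Sym2 ℕ)} (hs : TypeIIa Δ Δ') (h : IsMatching Δ)
    (h' : IsMatching Δ') {k : ℕ} (hk : Δ.card = k) (hk' : Δ'.card = k) :
    PermTypeII (h.perm hk) (h'.perm hk') := by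
  have hL := h.leftEmb_eq_of_leftEnds_eq h' hs.leftEnds_eq_and_rightEnds_eq.1 hk hk'
  have hR := h.rightEmb_eq_of_rightEnds_eq h' hs.leftEnds_eq_and_rightEnds_eq.2 hk hk'
  obtain ⟨a, b, c, d, hab, hbc, hcd, had, hbc', hcond, rfl⟩ := hs
  obtain ⟨ia, jd, hia, hjd, hσp⟩ := h.exists_perm_rev_eq hk had (hab.trans (hbc.trans hcd))
  obtain ⟨ib, jc, hib, hjc, hσq⟩ := h.exists_perm_rev_eq hk hbc' hbc
  set σ := h.perm hk
  set L := h.leftEmb hk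
  set R := h.rightEmb hk
  refine ⟨jd.rev, jc.rev, ?_, ?_, fun v hav hvb => ?_, ?_⟩
  · rw [Fin.rev_lt_rev, ← R.lt_iff_lt, hjc, hjd]
    exact hcd
  · rw [hσp, hσq, ← L.lt_iff_lt, hia, hib]
    exact hab
  · rw [hσp, ← L.lt_iff_lt, hia] at hav
    rw [hσq, ← L.lt_iff_lt, hib] at hvb
    have hv := h.mk_perm_mem hk (σ.symm v)
    rw [Equiv.apply_symm_apply] at hv
    have := hcond _ _ hav hvb hv
    rw [← hjc, R.lt_iff_lt, ← Fin.rev_lt_rev, Fin.rev_rev] at this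
    exact this
  · refine Equiv.ext fun t => (h'.perm_eq_iff hk').mpr ?_
    rw [hL, hR, Equiv.Perm.mul_apply]
    by_cases htp : t = jd.rev
    · rw [htp, Equiv.swap_apply_left, hσq, hib, Fin.rev_rev, hjd]
      exact mem_insert_of_mem (mem_insert_self _ _)
    by_cases htq : t = jc.rev
    · rw [htq, Equiv.swap_apply_right, hσp, hia, Fin.rev_rev, hjc]
      exact mem_insert_self _ _
    rw [Equiv.swap_apply_of_ne_of_ne htp htq]
    have hne : ∀ j, t ≠ j.rev → s(L (σ t), R t.rev) ≠ s(L (σ j.rev), R j) := fun j htj hst =>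
      htj (by rw [← ((h.mk_leftEmb_rightEmb_inj hk).mp hst).2, Fin.rev_rev])
    have h1 := hne jd htp
    have h2 := hne jc htq
    rw [hσp, hia, hjd] at h1
    rw [hσq, hib, hjc] at h2
    exact mem_insert_of_mem (mem_insert_of_mem (mem_erase.mpr ⟨h2, mem_erase.mpr
      ⟨h1, h.mk_perm_mem hk t⟩⟩))

theorem MatchStep.permLeI {Δ Δ' : Finset (Sym2 ℕ)} (hs : MatchStep Δ Δ') (h : IsMatching Δ)
    (h' : IsMatching Δ') (hΔ' : ¬ HasAlignedPair Δ') : PermLeI h.sigmaPerm h'.sigmaPerm := by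
  rcases hs with ⟨i, j, -, -, -, rfl⟩ | hIb | hIIa | hIIb
  · exact .single (.inl (h.typeIBelow_perm_of_subset h' rfl rfl (subset_insert _ _)))
  · obtain ⟨u, hu, rfl, hcard⟩ := hIb.exists_eq_image_map h
    rw [h'.sigmaPerm_eq hcard, h.perm_image_map hu h' rfl hcard]
    exact .refl
  · have hcard : Δ'.card = Δ.card := by
      rw [← h'.card_leftEnds, ← h.card_leftEnds, hIIa.leftEnds_eq_and_rightEnds_eq.1]
    rw [h'.sigmaPerm_eq hcard]
    exact .single (.inr ⟨rfl, hIIa.permTypeII h h' rfl hcard⟩)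
  · exact absurd hIIb.hasAlignedPair hΔ'

theorem MatchLe.permLeI {Δ Γ' : Finset (Sym2 ℕ)} (hle : MatchLe Δ Γ') (h : IsMatching Δ)
    (hΓ' : IsMatching Γ') (hna : ¬ HasAlignedPair Γ') : PermLeI h.sigmaPerm hΓ'.sigmaPerm := by
  induction hle using Relation.ReflTransGen.head_induction_on with
  | refl => exact .refl
  | head hs hrest ih =>
    have h₂ := hs.isMatching h
    exact (hs.permLeI h h₂ fun ha => hna (MatchLe.hasAlignedPair hrest ha)).trans (ih h₂)

/-- For intertwined perfect matchings `Γ` on `{1,…,2n}` and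
`Γ'` on `{1,…,2m}`, one has `Γ ⊑ Γ'` if and only if `p_Γ ≤ᵢ p_{Γ'}`, where
`p_Γ` is the associated permutation of `{1,…,n}` given by `p_Γ(i) = e_{n+1−i}`
(here `π` and `π'` are the 0-based versions of `p_Γ` and `p_{Γ'}`). -/
theorem matching_le_iff_perm_le (n m : ℕ)
    (Γ Γ' : Finset (Sym2 ℕ)) (e e' : ℕ → ℕ)
    (hΓ : IsIntertwined n Γ e) (hΓ' : IsIntertwined m Γ' e')
    (π : Equiv.Perm (Fin n)) (π' : Equiv.Perm (Fin m))
    (hπ : ∀ i : Fin n, (π i : ℕ) + 1 = e (n - (i : ℕ)))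
    (hπ' : ∀ i : Fin m, (π' i : ℕ) + 1 = e' (m - (i : ℕ))) :
    MatchLe Γ Γ' ↔ PermLeI ⟨n, π⟩ ⟨m, π'⟩ := by
  obtain rfl := hΓ.eq_permMatching hπ
  obtain rfl := hΓ'.eq_permMatching hπ'
  refine ⟨fun hle => ?_, PermLeI.matchLe_permMatching⟩
  have := hle.permLeI hΓ.1 hΓ'.1 (not_hasAlignedPair_permMatching π')
  rwa [hΓ.1.sigmaPerm_eq (card_permMatching π), hΓ'.1.sigmaPerm_eq (card_permMatching π'),
    perm_permMatching, perm_permMatching] at this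
end
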